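/- arXiv:2204.05914 — 2 statements merged into one kernel-verified Lean document; each statement's English description precedes it below -/
import Mathlib

section
/- Let f be a closure operator on a finite set E. If for every proper flat F of f the Bergman complex Δ(f/F) of the contraction f/F is shellable, then the augmented Bergman complex Δ̂(f) admits a shelling order in which all facets of the form (∅, F_•) corresponding to maximal flags of proper flats appear first and all facets of the form (I, ∅) corresponding to bases appear last. -/
open Finset

/-! ## Simplicial complexes as downward-relevant families of finite faces -/

section Complexes

variable {V : Type*} {W : Type*}

/-- A facet of a complex (given by its set of faces) is a maximal face. -/
def IsFacet (Δ : Set (Finset V)) (s : Finset V) : Prop :=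
  s ∈ Δ ∧ ∀ t ∈ Δ, s ⊆ t → s = t

/-- The deletion of a vertex `v`: all faces not containing `v`. -/
def faceDeletion (Δ : Set (Finset V)) (v : V) : Set (Finset V) :=
  {s ∈ Δ | v ∉ s}

/-- The link of a vertex `v`: faces `τ \ {v}` for `v ∈ τ ∈ Δ`. -/
def faceLink [DecidableEq V] (Δ : Set (Finset V)) (v : V) : Set (Finset V) :=
  {s | v ∉ s ∧ insert v s ∈ Δ}

/-- Vertex decomposability: `Δ` is a simplex (the family of all subsets of one finite
set, including the case `{∅}`), or it has a vertex `v` whose deletion and link are vertex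
decomposable and such that every facet of the deletion is a facet of `Δ`. -/
inductive IsVertexDecomposable [DecidableEq V] : Set (Finset V) → Prop
  | simplex (s : Finset V) : IsVertexDecomposable {t | t ⊆ s}
  | step (Δ : Set (Finset V)) (v : V) :
      {v} ∈ Δ →
      IsVertexDecomposable (faceDeletion Δ v) →
      IsVertexDecomposable (faceLink Δ v) →
      (∀ s, IsFacet (faceDeletion Δ v) s → IsFacet Δ s) →
      IsVertexDecomposable Δ

/-- A family of faces is pure of dimension `d` if it is nonempty and all of its
maximal elements have cardinality `d + 1`. -/
def IsPureDim (Δ : Set (Finset V)) (d : ℤ) : Prop :=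
  Δ.Nonempty ∧ ∀ s, IsFacet Δ s → (s.card : ℤ) = d + 1

/-- `l` is a shelling order of `Δ`: it enumerates the facets of `Δ` without repetition,
and for every `i ≥ 1` the complex `⟨σ₀, …, σ_{i-1}⟩ ∩ ⟨σ_i⟩` is pure of dimension
`dim σ_i - 1 = |σ_i| - 2`. -/
def IsShelling (Δ : Set (Finset V)) (l : List (Finset V)) : Prop :=
  l.Nodup ∧ (∀ s, s ∈ l ↔ IsFacet Δ s) ∧
  ∀ (i : ℕ) (hi : i < l.length), 0 < i →
    IsPureDim ({t | ∃ s ∈ l.take i, t ⊆ s} ∩ {t | t ⊆ l[i]})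
      ((l[i].card : ℤ) - 2)

/-- A complex is shellable if it admits a shelling order of its facets. -/
def Shellable (Δ : Set (Finset V)) : Prop := ∃ l, IsShelling Δ l

/-- The join of two complexes, realized on the sum of the two vertex types. -/
def complexJoin [DecidableEq V] [DecidableEq W]
    (Δ : Set (Finset V)) (Γ : Set (Finset W)) : Set (Finset (V ⊕ W)) :=
  {s | ∃ a ∈ Δ, ∃ b ∈ Γ, s = a.image Sum.inl ∪ b.image Sum.inr}

/-- An isomorphism of simplicial complexes: a vertex map which is injective on every
face and induces a bijection between the two families of faces. -/
def ComplexIso [DecidableEq W] (Δ : Set (Finset V)) (Γ : Set (Finset W)) : Prop :=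
  ∃ φ : V → W,
    (∀ s ∈ Δ, Set.InjOn φ ↑s) ∧
    (∀ s ∈ Δ, s.image φ ∈ Γ) ∧
    (∀ s t, s ∈ Δ → t ∈ Δ → s.image φ = t.image φ → s = t) ∧
    (∀ t ∈ Γ, ∃ s ∈ Δ, s.image φ = t)

/-- The property of appearing as an initial segment: any entry of `l` earlier than an
entry satisfying `P` also satisfies `P`. -/
def PrefixProp {α : Type*} (l : List α) (P : α → Prop) : Prop :=
  ∀ (i j : ℕ) (hi : i < l.length) (hj : j < l.length), i < j → P l[j] → P l[i]

/-- The property of appearing as a final segment: any entry of `l` later than an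
entry satisfying `P` also satisfies `P`. -/
def SuffixProp {α : Type*} (l : List α) (P : α → Prop) : Prop :=
  ∀ (i j : ℕ) (hi : i < l.length) (hj : j < l.length), i < j → P l[i] → P l[j]

/-- `a` appears strictly before `b` in the list `l`. -/
def ListPrec {α : Type*} (l : List α) (a b : α) : Prop :=
  ∃ (i j : ℕ) (hi : i < l.length) (hj : j < l.length), i < j ∧ l[i] = a ∧ l[j] = b

/-- The h-polynomial of a (finite) complex `Δ`, via
`h(Δ,t) = ∑_{s ∈ Δ} t^{|s|} (1-t)^{(d+1)-|s|}` where `d = dim Δ`. -/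
noncomputable def hPoly {V : Type*} [Fintype V] [DecidableEq V]
    (Δ : Set (Finset V)) : Polynomial ℤ :=
  ∑ s ∈ Δ.toFinite.toFinset,
    Polynomial.X ^ s.card *
      (1 - Polynomial.X) ^ (Δ.toFinite.toFinset.sup Finset.card - s.card)

end Complexes

/-! ## Closure operators -/

/-- A closure operator on the finite set `E`. -/
structure ClosureOp (E : Type*) [Fintype E] [DecidableEq E] where
  cl : Finset E → Finset E
  subset_cl : ∀ A, A ⊆ cl A
  cl_mono : ∀ ⦃A B : Finset E⦄, A ⊆ B → cl A ⊆ cl B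
  cl_idem : ∀ A, cl (cl A) = cl A

namespace ClosureOp

variable {E : Type*} [Fintype E] [DecidableEq E]

/-- A flat of `f` is a closed set. -/
def IsFlat (f : ClosureOp E) (F : Finset E) : Prop := f.cl F = F

/-- A proper flat of `f` is a flat different from the whole ground set. -/
def IsProperFlat (f : ClosureOp E) (F : Finset E) : Prop :=
  f.cl F = F ∧ F ≠ Finset.univ

/-- `I` is independent for `f` if removing any of its elements strictly shrinks its
closure. -/
def Indep (f : ClosureOp E) (I : Finset E) : Prop :=
  ∀ i ∈ I, f.cl (I.erase i) ⊂ f.cl I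

/-- A basis is an independent set whose closure is all of `E`. -/
def IsBasis (f : ClosureOp E) (I : Finset E) : Prop :=
  f.Indep I ∧ f.cl I = Finset.univ

/-- The independence complex of `f`: faces are the independent sets. -/
def indepComplex (f : ClosureOp E) : Set (Finset E) := {I | f.Indep I}

/-- The Bergman complex of `f`: faces are chains of proper flats strictly between
`f(∅)` and `E`. A vertex `x_F` is represented by the flat `F` itself. -/
def bergman (f : ClosureOp E) : Set (Finset (Finset E)) :=
  {C | (∀ F ∈ C, f.IsProperFlat F ∧ f.cl ∅ ⊂ F) ∧
       (∀ F ∈ C, ∀ G ∈ C, F ⊆ G ∨ G ⊆ F)}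

/-- The cone over the Bergman complex of `f`: chains of proper flats, where the
bottom flat `f(∅)` is allowed as a member. -/
def coneBergman (f : ClosureOp E) : Set (Finset (Finset E)) :=
  {C | (∀ F ∈ C, f.IsProperFlat F) ∧
       (∀ F ∈ C, ∀ G ∈ C, F ⊆ G ∨ G ⊆ F)}

/-- The augmented Bergman complex of `f`, on the vertex set
`{y_i : i ∈ E} ⊔ {x_F : F a proper flat}`; here `y_i = Sum.inl i` and
`x_F = Sum.inr F`.  Faces consist of an independent set `I` together with a chain of
proper flats all containing `f(I)`. -/
def augBergman (f : ClosureOp E) : Set (Finset (E ⊕ Finset E)) :=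
  {s | ∃ (I : Finset E) (C : Finset (Finset E)),
    s = I.image Sum.inl ∪ C.image Sum.inr ∧
    f.Indep I ∧
    (∀ F ∈ C, f.IsProperFlat F) ∧
    (∀ F ∈ C, ∀ G ∈ C, F ⊆ G ∨ G ⊆ F) ∧
    (∀ F ∈ C, f.cl I ⊆ F)}

/-- An upper-set of proper flats of `f`. -/
def IsFlatUpperSet (f : ClosureOp E) (L : Set (Finset E)) : Prop :=
  (∀ F ∈ L, f.IsProperFlat F) ∧
  ∀ F ∈ L, ∀ F', f.IsProperFlat F' → F ⊆ F' → F' ∈ L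

/-- The induced subcomplex of the augmented Bergman complex on the vertex set
`{y_i : i ∈ E} ⊔ {x_F : F ∈ L}`. -/
def augBergmanOn (f : ClosureOp E) (L : Set (Finset E)) :
    Set (Finset (E ⊕ Finset E)) :=
  {s | s ∈ f.augBergman ∧ ∀ F : Finset E, Sum.inr F ∈ s → F ∈ L}

/-- The restriction `f|_F` of a closure operator to `F`, as a closure operator on the
subtype `{x // x ∈ F}`; when `F` is a flat, `(f|_F)(A) = f(A)`. -/
def restrict (f : ClosureOp E) (F : Finset E) : ClosureOp {x // x ∈ F} where
  cl A := (f.cl (A.image Subtype.val)).subtype (· ∈ F)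
  subset_cl A a ha := by
    rw [Finset.mem_subtype]
    exact f.subset_cl _ (Finset.mem_image_of_mem _ ha)
  cl_mono A B h a ha := by
    rw [Finset.mem_subtype] at *
    exact f.cl_mono (Finset.image_subset_image h) ha
  cl_idem A := by
    have key : ∀ s : Finset E,
        ((s.subtype (· ∈ F)).image Subtype.val) = s.filter (· ∈ F) := by
      intro s
      ext x
      simp [Finset.mem_subtype, Finset.mem_image, Finset.mem_filter, Subtype.exists,
        and_comm]
    ext a
    rw [Finset.mem_subtype, Finset.mem_subtype, key]
    constructor
    · intro hx
      have h1 : f.cl ((f.cl (A.image Subtype.val)).filter (· ∈ F))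
          ⊆ f.cl (A.image Subtype.val) := by
        have := f.cl_mono (Finset.filter_subset (· ∈ F) (f.cl (A.image Subtype.val)))
        rw [f.cl_idem] at this
        exact this
      exact h1 hx
    · intro hx
      refine f.cl_mono ?_ hx
      intro x hxA
      rw [Finset.mem_filter]
      obtain ⟨a', _, rfl⟩ := Finset.mem_image.mp hxA
      exact ⟨f.subset_cl _ hxA, a'.2⟩

/-- The contraction `f/F` of a closure operator by `F`, as a closure operator on the
subtype `{x // x ∉ F}`; it is given by `(f/F)(A) = f(A ∪ F) \ F`. -/
def contract (f : ClosureOp E) (F : Finset E) : ClosureOp {x // x ∉ F} where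
  cl A := (f.cl (A.image Subtype.val ∪ F)).subtype (· ∉ F)
  subset_cl A a ha := by
    rw [Finset.mem_subtype]
    exact f.subset_cl _ (Finset.mem_union_left _ (Finset.mem_image_of_mem _ ha))
  cl_mono A B h a ha := by
    rw [Finset.mem_subtype] at *
    exact f.cl_mono (Finset.union_subset_union_left (Finset.image_subset_image h)) ha
  cl_idem A := by
    have key : ∀ s : Finset E,
        ((s.subtype (· ∉ F)).image Subtype.val) = s.filter (· ∉ F) := by
      intro s
      ext x
      simp [Finset.mem_subtype, Finset.mem_image, Finset.mem_filter, Subtype.exists,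
        and_comm]
    set s := f.cl (A.image Subtype.val ∪ F) with hs
    have hFs : F ⊆ s := fun x hx => f.subset_cl _ (Finset.mem_union_right _ hx)
    have hmain : f.cl ((s.subtype (· ∉ F)).image Subtype.val ∪ F) = s := by
      rw [key]
      apply le_antisymm
      · have h1 : s.filter (· ∉ F) ∪ F ⊆ s :=
          Finset.union_subset (Finset.filter_subset _ _) hFs
        have := f.cl_mono h1
        rw [hs, f.cl_idem] at this
        exact this
      · refine f.cl_mono ?_
        intro x hx
        rcases Finset.mem_union.mp hx with hx' | hx'
        · obtain ⟨a', _, rfl⟩ := Finset.mem_image.mp hx'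
          by_cases hxF : (a' : E) ∈ F
          · exact Finset.mem_union_right _ hxF
          · exact Finset.mem_union_left _
              (Finset.mem_filter.mpr ⟨f.subset_cl _ (Finset.mem_union_left _ hx'), hxF⟩)
        · exact Finset.mem_union_right _ hx'
    ext a
    rw [Finset.mem_subtype, Finset.mem_subtype, hmain]

end ClosureOp

/-! ## Matroids and their closure operators -/

/-- The closure operator (on finsets) of a matroid whose ground set is all of the
finite type `E`. -/
noncomputable def Matroid.closureOp {E : Type*} [Fintype E] [DecidableEq E]
    (M : Matroid E) (hE : M.E = Set.univ) : ClosureOp E where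
  cl A := (M.closure ↑A).toFinite.toFinset
  subset_cl A := by
    intro a ha
    simp only [Set.Finite.mem_toFinset]
    exact M.subset_closure (↑A) (by simp [hE]) ha
  cl_mono A B h := by
    intro a ha
    simp only [Set.Finite.mem_toFinset] at *
    exact M.closure_subset_closure (Finset.coe_subset.mpr h) ha
  cl_idem A := by
    ext a
    simp only [Set.Finite.mem_toFinset, Set.Finite.coe_toFinset]
    rw [M.closure_closure]

/-! ## The flag-to-basis order on facets of the augmented Bergman complex -/

namespace ClosureOp

variable {E : Type*} [Fintype E] [DecidableEq E]

/-- The independent-set part `I` of a face of the augmented Bergman complex. -/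
noncomputable def faceIndep (s : Finset (E ⊕ Finset E)) : Finset E :=
  s.preimage Sum.inl Sum.inl_injective.injOn

/-- The flag part `F_•` of a face of the augmented Bergman complex. -/
noncomputable def faceFlag (s : Finset (E ⊕ Finset E)) : Finset (Finset E) :=
  s.preimage Sum.inr Sum.inr_injective.injOn

/-- The flag part of a facet with its minimal flat `f(I)` removed, regarded as a face
of the Bergman complex of the contraction `f / f(I)`: each flat `G` of the flag is
sent to the flat `G \ f(I)` of the contraction. -/
noncomputable def reducedFlag (f : ClosureOp E) (s : Finset (E ⊕ Finset E)) : Finset (Finset E) :=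
  ((faceFlag s).erase (f.cl (faceIndep s))).image (fun G => G \ f.cl (faceIndep s))

/-- The flag-to-basis order `≺` on facets of the augmented Bergman complex, relative
to a linear extension `r` of the independence complex and a fixed family `sh` of
shellings of the Bergman complexes of the contractions `f/F`.  Facets with nonempty
flag are compared first by `r` on their independent parts, then (for equal independent
parts) by the position of their reduced flags in the fixed shelling `sh (f.cl I)`
(whose faces are mapped down to `Finset E` level by taking images of `Subtype.val`);
facets with empty flag (bases) come after all facets with nonempty flag. -/
def augPrec (f : ClosureOp E) (r : Finset E → Finset E → Prop)
    (sh : (F : Finset E) → List (Finset (Finset {x // x ∉ F})))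
    (s t : Finset (E ⊕ Finset E)) : Prop :=
  ((faceFlag s).Nonempty ∧ (faceFlag t).Nonempty ∧
    (r (faceIndep s) (faceIndep t) ∨
      (faceIndep s = faceIndep t ∧
        ListPrec ((sh (f.cl (faceIndep s))).map
            (fun c => c.image (fun G => G.image Subtype.val)))
          (f.reducedFlag s) (f.reducedFlag t)))) ∨
  ((faceFlag s).Nonempty ∧ faceFlag t = ∅)

end ClosureOp

set_option linter.unusedSectionVars false

namespace FTB
open ClosureOp

variable {E : Type*} [Fintype E] [DecidableEq E]

/-- Image of an independent part in the augmented vertex set. -/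
def inl' (I : Finset E) : Finset (E ⊕ Finset E) := I.image Sum.inl

/-- Image of a flag part in the augmented vertex set. -/
def inr' (C : Finset (Finset E)) : Finset (E ⊕ Finset E) := C.image Sum.inr

@[simp] lemma mem_inl' {a : E} {I : Finset E} : Sum.inl a ∈ inl' I ↔ a ∈ I := by
  simp [inl']

@[simp] lemma mem_inr' {F : Finset E} {C : Finset (Finset E)} :
    Sum.inr F ∈ inr' C ↔ F ∈ C := by simp [inr']

@[simp] lemma inl_not_mem_inr' {a : E} {C : Finset (Finset E)} :
    Sum.inl a ∉ inr' C := by simp [inr']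

@[simp] lemma inr_not_mem_inl' {F : Finset E} {I : Finset E} :
    Sum.inr F ∉ inl' I := by simp [inl']

@[simp] lemma inl'_empty : inl' (∅ : Finset E) = ∅ := by simp [inl']

@[simp] lemma inr'_empty : inr' (∅ : Finset (Finset E)) = ∅ := by simp [inr']

lemma union_subset_union_iff {I I' : Finset E} {C C' : Finset (Finset E)} :
    inl' I ∪ inr' C ⊆ inl' I' ∪ inr' C' ↔ I ⊆ I' ∧ C ⊆ C' := by
  constructor
  · intro h
    constructor
    · intro a ha
      have := h (by simp [ha] : Sum.inl a ∈ inl' I ∪ inr' C)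
      simpa using this
    · intro F hF
      have := h (by simp [hF] : Sum.inr F ∈ inl' I ∪ inr' C)
      simpa using this
  · rintro ⟨h1, h2⟩ v hv
    rcases v with a | F
    · simp only [Finset.mem_union, mem_inl'] at hv ⊢
      rcases hv with hv | hv
      · exact Or.inl (h1 hv)
      · exact absurd hv inl_not_mem_inr'
    · simp only [Finset.mem_union, mem_inr'] at hv ⊢
      rcases hv with hv | hv
      · exact absurd hv inr_not_mem_inl'
      · exact Or.inr (h2 hv)

lemma union_inter_union {I I' : Finset E} {C C' : Finset (Finset E)} :
    (inl' I ∪ inr' C) ∩ (inl' I' ∪ inr' C') = inl' (I ∩ I') ∪ inr' (C ∩ C') := by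
  ext v
  rcases v with a | F <;> simp [Finset.mem_inter]

lemma card_union' (I : Finset E) (C : Finset (Finset E)) :
    (inl' I ∪ inr' C).card = I.card + C.card := by
  rw [Finset.card_union_of_disjoint, inl', inr',
    Finset.card_image_of_injective _ Sum.inl_injective,
    Finset.card_image_of_injective _ Sum.inr_injective]
  rw [Finset.disjoint_left]
  rintro (a | F) hv hv'
  · exact inl_not_mem_inr' hv'
  · exact inr_not_mem_inl' hv

@[simp] lemma faceIndep_union (I : Finset E) (C : Finset (Finset E)) :
    ClosureOp.faceIndep (inl' I ∪ inr' C) = I := by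
  ext a
  simp [ClosureOp.faceIndep, Finset.mem_preimage]

@[simp] lemma faceFlag_union (I : Finset E) (C : Finset (Finset E)) :
    ClosureOp.faceFlag (inl' I ∪ inr' C) = C := by
  ext F
  simp [ClosureOp.faceFlag, Finset.mem_preimage]

lemma decomp (s : Finset (E ⊕ Finset E)) :
    s = inl' (ClosureOp.faceIndep s) ∪ inr' (ClosureOp.faceFlag s) := by
  ext v
  rcases v with a | F <;>
    simp [ClosureOp.faceIndep, ClosureOp.faceFlag, Finset.mem_preimage]

variable (f : ClosureOp E)

lemma cl_subset_cl_of_subset_cl {A B : Finset E} (h : A ⊆ f.cl B) :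
    f.cl A ⊆ f.cl B := by
  have := f.cl_mono h
  rwa [f.cl_idem] at this

lemma indep_subset {I J : Finset E} (hI : f.Indep I) (hJI : J ⊆ I) : f.Indep J := by
  intro j hj
  refine lt_of_le_of_ne (f.cl_mono (Finset.erase_subset _ _)) ?_
  intro heq
  have hjcl : j ∈ f.cl (J.erase j) := by
    rw [heq]; exact f.subset_cl _ hj
  have hIsub : I ⊆ f.cl (I.erase j) := by
    intro x hx
    by_cases hxj : x = j
    · subst hxj
      exact f.cl_mono (Finset.erase_subset_erase _ hJI) hjcl
    · exact f.subset_cl _ (Finset.mem_erase.2 ⟨hxj, hx⟩)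
  have : f.cl I ⊆ f.cl (I.erase j) := cl_subset_cl_of_subset_cl f hIsub
  have h2 := hI j (hJI hj)
  exact h2.ne (le_antisymm (f.cl_mono (Finset.erase_subset _ _)) this)

lemma indep_insert_growth {I : Finset E} {a : E} (h : f.Indep (insert a I))
    (ha : a ∉ I) : f.cl I ⊂ f.cl (insert a I) := by
  have := h a (Finset.mem_insert_self a I)
  rwa [Finset.erase_insert ha] at this

lemma indep_of_cl_empty_univ {I : Finset E} (h0 : f.cl ∅ = Finset.univ)
    (hI : f.Indep I) : I = ∅ := by
  by_contra hne
  obtain ⟨i, hi⟩ := Finset.nonempty_iff_ne_empty.2 hne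
  have := hI i hi
  have h1 : f.cl (I.erase i) = Finset.univ := by
    apply le_antisymm (Finset.subset_univ _)
    rw [← h0]
    exact f.cl_mono (Finset.empty_subset _)
  rw [h1] at this
  exact this.2 (Finset.subset_univ _)

lemma properFlat_cl {I : Finset E} (h : f.cl I ≠ Finset.univ) :
    f.IsProperFlat (f.cl I) := ⟨f.cl_idem I, h⟩

/-! ### Membership and facets of the augmented Bergman complex -/

/-- Chains of finsets under inclusion. -/
def IsChain' (C : Finset (Finset E)) : Prop := ∀ F ∈ C, ∀ G ∈ C, F ⊆ G ∨ G ⊆ F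

/-- `C` is a maximal chain of proper flats with minimum `F`. -/
def MaxChain (f : ClosureOp E) (F : Finset E) (C : Finset (Finset E)) : Prop :=
  F ∈ C ∧ (∀ G ∈ C, f.IsProperFlat G ∧ F ⊆ G) ∧ IsChain' C ∧
    ∀ G, f.IsProperFlat G → F ⊆ G → (∀ G' ∈ C, G ⊆ G' ∨ G' ⊆ G) → G ∈ C

lemma chain_insert {C : Finset (Finset E)} {G : Finset E} (hch : IsChain' C)
    (hcomp : ∀ G' ∈ C, G ⊆ G' ∨ G' ⊆ G) : IsChain' (insert G C) := by
  intro F hF F' hF'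
  rcases Finset.mem_insert.1 hF with hFe | hF <;>
    rcases Finset.mem_insert.1 hF' with hF'e | hF'
  · rw [hFe, hF'e]; exact Or.inl (subset_refl _)
  · rw [hFe]; exact hcomp F' hF'
  · rw [hF'e]; exact (hcomp F hF).symm
  · exact hch F hF F' hF'

lemma mem_augBergman_iff {s : Finset (E ⊕ Finset E)} :
    s ∈ f.augBergman ↔
      f.Indep (ClosureOp.faceIndep s) ∧
      (∀ F ∈ ClosureOp.faceFlag s, f.IsProperFlat F) ∧
      IsChain' (ClosureOp.faceFlag s) ∧
      ∀ F ∈ ClosureOp.faceFlag s, f.cl (ClosureOp.faceIndep s) ⊆ F := by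
  constructor
  · rintro ⟨I, C, hs, hI, h1, h2, h3⟩
    subst hs
    have e1 : ClosureOp.faceIndep (I.image Sum.inl ∪ C.image Sum.inr) = I :=
      faceIndep_union I C
    have e2 : ClosureOp.faceFlag (I.image Sum.inl ∪ C.image Sum.inr) = C :=
      faceFlag_union I C
    rw [e1, e2]
    exact ⟨hI, h1, h2, h3⟩
  · rintro ⟨hI, h1, h2, h3⟩
    exact ⟨ClosureOp.faceIndep s, ClosureOp.faceFlag s, decomp s, hI, h1, h2, h3⟩

lemma mem_augBergman_union {I : Finset E} {C : Finset (Finset E)} :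
    (inl' I ∪ inr' C) ∈ f.augBergman ↔
      f.Indep I ∧ (∀ F ∈ C, f.IsProperFlat F) ∧ IsChain' C ∧ ∀ F ∈ C, f.cl I ⊆ F := by
  rw [mem_augBergman_iff, faceIndep_union, faceFlag_union]

lemma facet_basis {I : Finset E} (hI : f.Indep I) (hcl : f.cl I = Finset.univ) :
    IsFacet f.augBergman (inl' I) := by
  have hmem : inl' I ∈ f.augBergman := by
    rw [show inl' I = inl' I ∪ inr' ∅ by simp, mem_augBergman_union]
    exact ⟨hI, by simp, by simp [IsChain'], by simp⟩
  refine ⟨hmem, fun t ht hsub => ?_⟩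
  rw [mem_augBergman_iff] at ht
  obtain ⟨hIt, h1, _, h3⟩ := ht
  have hsub' : I ⊆ ClosureOp.faceIndep t := by
    have := hsub
    rw [show inl' I = inl' I ∪ inr' ∅ by simp, decomp t,
      union_subset_union_iff] at this
    exact this.1
  have hIeq : ClosureOp.faceIndep t = I := by
    apply Finset.Subset.antisymm _ hsub'
    intro a ha
    by_contra haI
    have h4 : insert a I ⊆ ClosureOp.faceIndep t := Finset.insert_subset ha hsub'
    have h5 := indep_insert_growth f (indep_subset f hIt h4) haI
    rw [hcl] at h5
    exact h5.2 (Finset.subset_univ _)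
  have hCeq : ClosureOp.faceFlag t = ∅ := by
    rw [Finset.eq_empty_iff_forall_notMem]
    intro F hF
    have h4 := (h1 F hF).2
    have h5 := h3 F hF
    rw [hIeq, hcl] at h5
    exact h4 (le_antisymm (Finset.subset_univ _) h5)
  rw [decomp t, hIeq, hCeq]
  simp

lemma facet_flag {I : Finset E} {C : Finset (Finset E)} (hI : f.Indep I)
    (hM : MaxChain f (f.cl I) C) :
    IsFacet f.augBergman (inl' I ∪ inr' C) := by
  obtain ⟨hFC, hprop, hchain, hmax⟩ := hM
  have hmem : (inl' I ∪ inr' C) ∈ f.augBergman := by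
    rw [mem_augBergman_union]
    exact ⟨hI, fun F hF => (hprop F hF).1, hchain, fun F hF => (hprop F hF).2⟩
  refine ⟨hmem, fun t ht hsub => ?_⟩
  rw [mem_augBergman_iff] at ht
  obtain ⟨hIt, h1, h2, h3⟩ := ht
  rw [decomp t, union_subset_union_iff] at hsub
  have hIeq : ClosureOp.faceIndep t = I := by
    apply Finset.Subset.antisymm _ hsub.1
    intro a ha
    by_contra haI
    have h4 : insert a I ⊆ ClosureOp.faceIndep t := Finset.insert_subset ha hsub.1
    have h5 := indep_insert_growth f (indep_subset f hIt h4) haI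
    have h6 : f.cl (insert a I) ⊆ f.cl I := by
      calc f.cl (insert a I) ⊆ f.cl (ClosureOp.faceIndep t) := f.cl_mono h4
        _ ⊆ f.cl I := h3 _ (hsub.2 hFC)
    exact h5.2 h6
  have hCeq : ClosureOp.faceFlag t = C := by
    apply Finset.Subset.antisymm _ hsub.2
    intro G hG
    apply hmax G (h1 G hG)
    · rw [← hIeq]; exact h3 G hG
    · intro G' hG'
      exact h2 G hG G' (hsub.2 hG')
  rw [decomp t, hIeq, hCeq]

lemma facet_cases {s : Finset (E ⊕ Finset E)} (hs : IsFacet f.augBergman s) :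
    f.Indep (ClosureOp.faceIndep s) ∧
      ((f.cl (ClosureOp.faceIndep s) = Finset.univ ∧ ClosureOp.faceFlag s = ∅) ∨
       (f.cl (ClosureOp.faceIndep s) ≠ Finset.univ ∧
         MaxChain f (f.cl (ClosureOp.faceIndep s)) (ClosureOp.faceFlag s))) := by
  have hmem := hs.1
  rw [mem_augBergman_iff] at hmem
  obtain ⟨hI, h1, h2, h3⟩ := hmem
  refine ⟨hI, ?_⟩
  have key : ∀ G, f.IsProperFlat G → f.cl (ClosureOp.faceIndep s) ⊆ G →
      (∀ G' ∈ ClosureOp.faceFlag s, G ⊆ G' ∨ G' ⊆ G) → G ∈ ClosureOp.faceFlag s := by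
    intro G hGp hGcl hGcomp
    by_contra hG
    have hmem2 : (inl' (ClosureOp.faceIndep s) ∪ inr' (insert G (ClosureOp.faceFlag s)))
        ∈ f.augBergman := by
      rw [mem_augBergman_union]
      refine ⟨hI, ?_, ?_, ?_⟩
      · intro F hF
        rcases Finset.mem_insert.1 hF with rfl | hF
        · exact hGp
        · exact h1 F hF
      · exact chain_insert h2 hGcomp
      · intro F hF
        rcases Finset.mem_insert.1 hF with hFe | hF
        · rw [hFe]; exact hGcl
        · exact h3 F hF
    have hsub : s ⊆ inl' (ClosureOp.faceIndep s) ∪ inr' (insert G (ClosureOp.faceFlag s)) := by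
      conv_lhs => rw [decomp s]
      exact union_subset_union_iff.2 ⟨subset_refl _, Finset.subset_insert _ _⟩
    have heq := hs.2 _ hmem2 hsub
    have hthis := congrArg ClosureOp.faceFlag heq
    rw [faceFlag_union] at hthis
    exact hG (by rw [hthis]; exact Finset.mem_insert_self G _)
  by_cases hcl : f.cl (ClosureOp.faceIndep s) = Finset.univ
  · refine Or.inl ⟨hcl, ?_⟩
    rw [Finset.eq_empty_iff_forall_notMem]
    intro F hF
    have h4 := h3 F hF
    rw [hcl] at h4
    exact (h1 F hF).2 (le_antisymm (Finset.subset_univ _) h4)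
  · refine Or.inr ⟨hcl, ?_, fun G hG => ⟨h1 G hG, h3 G hG⟩, h2, key⟩
    exact key _ (properFlat_cl f hcl) (subset_refl _) fun G' hG' => Or.inl (h3 G' hG')

lemma exists_maxChain {F₀ : Finset E} (hF₀ : f.IsProperFlat F₀) {C : Finset (Finset E)}
    (hC1 : ∀ G ∈ C, f.IsProperFlat G ∧ F₀ ⊆ G) (hC2 : IsChain' C) :
    ∃ D, MaxChain f F₀ D ∧ C ⊆ D := by
  classical
  set P : Finset (Finset E) → Prop := fun D =>
    (∀ G ∈ D, f.IsProperFlat G ∧ F₀ ⊆ G) ∧ IsChain' D ∧ insert F₀ C ⊆ D with hP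
  have hPC : P (insert F₀ C) := by
    refine ⟨?_, ?_, subset_refl _⟩
    · intro G hG
      rcases Finset.mem_insert.1 hG with rfl | hG
      · exact ⟨hF₀, subset_refl _⟩
      · exact hC1 G hG
    · exact chain_insert hC2 (fun G' hG' => Or.inl (hC1 G' hG').2)
  have hTne : (Finset.univ.filter P).Nonempty :=
    ⟨insert F₀ C, Finset.mem_filter.2 ⟨Finset.mem_univ _, hPC⟩⟩
  obtain ⟨D, hDT, hDmax⟩ := Finset.exists_max_image (Finset.univ.filter P) Finset.card hTne
  rw [Finset.mem_filter] at hDT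
  obtain ⟨-, hD1, hD2, hD3⟩ := hDT
  have hF₀D : F₀ ∈ D := hD3 (Finset.mem_insert_self _ _)
  refine ⟨D, ⟨hF₀D, hD1, hD2, ?_⟩, fun G hG => hD3 (Finset.mem_insert_of_mem hG)⟩
  intro G hGp hGcl hGcomp
  by_contra hG
  have hPD : P (insert G D) := by
    refine ⟨?_, ?_, hD3.trans (Finset.subset_insert _ _)⟩
    · intro F hF
      rcases Finset.mem_insert.1 hF with rfl | hF
      · exact ⟨hGp, hGcl⟩
      · exact hD1 F hF
    · exact chain_insert hD2 hGcomp
  have h5 := hDmax (insert G D) (Finset.mem_filter.2 ⟨Finset.mem_univ _, hPD⟩)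
  rw [Finset.card_insert_of_notMem hG] at h5
  omega

/-! ### Lifting flats of a contraction -/

/-- Lift a set of the contraction `f/F` to a subset of `E` containing `F`. -/
def liftF (F : Finset E) (G : Finset {x // x ∉ F}) : Finset E :=
  G.image Subtype.val ∪ F

/-- Restrict a subset of `E` to the ground set of the contraction `f/F`. -/
def toSub (F : Finset E) (G : Finset E) : Finset {x // x ∉ F} :=
  G.subtype (· ∉ F)

/-- The cone map sending a chain of the contraction to a chain of flats above `F`
together with `F` itself. -/
def coneLift (F : Finset E) (c : Finset (Finset {x // x ∉ F})) : Finset (Finset E) :=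
  insert F (c.image (liftF F))

variable {F : Finset E}

lemma mem_toSub {G : Finset E} {a : {x // x ∉ F}} : a ∈ toSub F G ↔ (a : E) ∈ G := by
  simp [toSub, Finset.mem_subtype]

lemma toSub_mono {G G' : Finset E} (h : G ⊆ G') : toSub F G ⊆ toSub F G' := by
  intro a ha
  rw [mem_toSub] at *
  exact h ha

lemma mem_liftF {G : Finset {x // x ∉ F}} {a : E} :
    a ∈ liftF F G ↔ (∃ h : a ∉ F, (⟨a, h⟩ : {x // x ∉ F}) ∈ G) ∨ a ∈ F := by
  simp only [liftF, Finset.mem_union, Finset.mem_image]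
  constructor
  · rintro (⟨b, hb, rfl⟩ | h)
    · exact Or.inl ⟨b.2, hb⟩
    · exact Or.inr h
  · rintro (⟨h, hm⟩ | h)
    · exact Or.inl ⟨⟨a, h⟩, hm, rfl⟩
    · exact Or.inr h

lemma toSub_liftF (G : Finset {x // x ∉ F}) : toSub F (liftF F G) = G := by
  ext a
  rw [mem_toSub, mem_liftF]
  constructor
  · rintro (⟨h, hm⟩ | h)
    · convert hm
    · exact absurd h a.2
  · intro h
    exact Or.inl ⟨a.2, by convert h⟩

lemma liftF_injective : Function.Injective (liftF F) := by
  intro a b h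
  rw [← toSub_liftF (F := F) a, h, toSub_liftF]

lemma subset_liftF (G : Finset {x // x ∉ F}) : F ⊆ liftF F G :=
  Finset.subset_union_right

lemma liftF_toSub {G : Finset E} (h : F ⊆ G) : liftF F (toSub F G) = G := by
  ext a
  rw [mem_liftF]
  constructor
  · rintro (⟨ha, hm⟩ | ha)
    · exact mem_toSub.1 hm
    · exact h ha
  · intro ha
    by_cases haF : a ∈ F
    · exact Or.inr haF
    · exact Or.inl ⟨haF, mem_toSub.2 ha⟩

lemma liftF_subset_liftF {G G' : Finset {x // x ∉ F}} :
    liftF F G ⊆ liftF F G' ↔ G ⊆ G' := by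
  constructor
  · intro h a ha
    have : (a : E) ∈ liftF F G := mem_liftF.2 (Or.inl ⟨a.2, by convert ha⟩)
    rcases mem_liftF.1 (h this) with ⟨h', hm⟩ | h'
    · convert hm
    · exact absurd h' a.2
  · intro h
    exact Finset.union_subset_union_left (Finset.image_subset_image h)

@[simp] lemma liftF_empty : liftF F (∅ : Finset {x // x ∉ F}) = F := by
  simp [liftF]

lemma liftF_eq_iff {G : Finset {x // x ∉ F}} : liftF F G = F ↔ G = ∅ := by
  constructor
  · intro h
    rw [Finset.eq_empty_iff_forall_notMem]
    intro a ha
    have : (a : E) ∈ liftF F G := mem_liftF.2 (Or.inl ⟨a.2, by convert ha⟩)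
    rw [h] at this
    exact a.2 this
  · rintro rfl; simp

lemma liftF_eq_univ_iff {G : Finset {x // x ∉ F}} :
    liftF F G = Finset.univ ↔ G = Finset.univ := by
  constructor
  · intro h
    ext a
    simp only [Finset.mem_univ, iff_true]
    have : (a : E) ∈ liftF F G := h ▸ Finset.mem_univ _
    rcases mem_liftF.1 this with ⟨h', hm⟩ | h'
    · convert hm
    · exact absurd h' a.2
  · rintro rfl
    ext a
    simp only [Finset.mem_univ, iff_true, mem_liftF]
    by_cases haF : a ∈ F
    · exact Or.inr haF
    · exact Or.inl ⟨haF, trivial⟩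

lemma contract_cl (G : Finset {x // x ∉ F}) :
    (f.contract F).cl G = toSub F (f.cl (liftF F G)) := rfl

lemma liftF_contract_cl (G : Finset {x // x ∉ F}) :
    liftF F ((f.contract F).cl G) = f.cl (liftF F G) := by
  rw [contract_cl, liftF_toSub]
  intro a ha
  exact f.subset_cl _ (mem_liftF.2 (Or.inr ha))

lemma contract_properFlat_iff {G : Finset {x // x ∉ F}} :
    (f.contract F).IsProperFlat G ↔ f.IsProperFlat (liftF F G) := by
  constructor
  · rintro ⟨h1, h2⟩
    constructor
    · rw [← liftF_contract_cl, h1]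
    · intro h
      exact h2 (liftF_eq_univ_iff.1 h)
  · rintro ⟨h1, h2⟩
    constructor
    · have := liftF_contract_cl f G
      rw [h1] at this
      exact liftF_injective this
    · intro h
      rw [h] at h2
      exact h2 (liftF_eq_univ_iff.2 rfl)

lemma contract_cl_empty (hF : f.cl F = F) : (f.contract F).cl ∅ = ∅ := by
  rw [contract_cl, liftF_empty, hF]
  ext a
  rw [mem_toSub]
  simp only [Finset.notMem_empty, iff_false]
  exact a.2

/-- Characterization of facets of a Bergman complex: maximal chains of proper flats
strictly above the closure of `∅`. -/
lemma bergman_facet_iff (g : ClosureOp E) (c : Finset (Finset E)) :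
    IsFacet g.bergman c ↔
      ((∀ G ∈ c, g.IsProperFlat G ∧ g.cl ∅ ⊂ G) ∧ IsChain' c) ∧
      ∀ G, g.IsProperFlat G → g.cl ∅ ⊂ G → (∀ G' ∈ c, G ⊆ G' ∨ G' ⊆ G) → G ∈ c := by
  constructor
  · intro hs
    obtain ⟨⟨hp, hch⟩, hmax⟩ := hs
    refine ⟨⟨hp, hch⟩, ?_⟩
    intro G hGp hGv hGcomp
    by_contra hG
    have hmem : (insert G c) ∈ g.bergman := by
      constructor
      · intro G' hG'
        rcases Finset.mem_insert.1 hG' with hGe | hG'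
        · rw [hGe]; exact ⟨hGp, hGv⟩
        · exact hp G' hG'
      · exact chain_insert hch hGcomp
    have := hmax _ hmem (Finset.subset_insert _ _)
    exact hG (by rw [this]; exact Finset.mem_insert_self _ _)
  · rintro ⟨⟨hp, hch⟩, hmax⟩
    refine ⟨⟨hp, hch⟩, ?_⟩
    intro t ht hsub
    apply Finset.Subset.antisymm hsub
    intro G hG
    exact hmax G (ht.1 G hG).1 (ht.1 G hG).2 fun G' hG' => ht.2 G hG G' (hsub hG')

lemma F_not_mem_image_liftF {c : Finset (Finset {x // x ∉ F})} (hc : ∅ ∉ c) :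
    F ∉ c.image (liftF F) := by
  intro h
  obtain ⟨g, hg, hgF⟩ := Finset.mem_image.1 h
  rw [liftF_eq_iff.1 hgF] at hg
  exact hc hg

lemma coneLift_card {c : Finset (Finset {x // x ∉ F})} (hc : ∅ ∉ c) :
    (coneLift F c).card = c.card + 1 := by
  rw [coneLift, Finset.card_insert_of_notMem (F_not_mem_image_liftF hc),
    Finset.card_image_of_injective _ liftF_injective]

lemma coneLift_inter (c d : Finset (Finset {x // x ∉ F})) :
    coneLift F c ∩ coneLift F d = coneLift F (c ∩ d) := by
  rw [coneLift, coneLift, coneLift, ← Finset.insert_inter_distrib,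
    Finset.image_inter _ _ liftF_injective]

lemma coneLift_inj {c d : Finset (Finset {x // x ∉ F})} (hc : ∅ ∉ c) (hd : ∅ ∉ d)
    (h : coneLift F c = coneLift F d) : c = d := by
  have h2 : c.image (liftF F) = d.image (liftF F) := by
    have := congrArg (fun X => Finset.erase X F) h
    simpa [coneLift, Finset.erase_insert_of_ne, Finset.erase_eq_of_notMem,
      F_not_mem_image_liftF hc, F_not_mem_image_liftF hd,
      Finset.erase_insert (F_not_mem_image_liftF hc),
      Finset.erase_insert (F_not_mem_image_liftF hd)] using this
  exact Finset.image_injective liftF_injective h2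

/-- Facets of the Bergman complex of `f/F` give maximal chains of proper flats of `f`
with minimum `F`. -/
lemma maxChain_coneLift (hF : f.IsProperFlat F) {c : Finset (Finset {x // x ∉ F})}
    (hc : IsFacet (f.contract F).bergman c) : MaxChain f F (coneLift F c) := by
  rw [bergman_facet_iff] at hc
  obtain ⟨⟨hp, hch⟩, hmax⟩ := hc
  have hcl0 : (f.contract F).cl ∅ = ∅ := contract_cl_empty f hF.1
  refine ⟨Finset.mem_insert_self _ _, ?_, ?_, ?_⟩
  · intro G hG
    rcases Finset.mem_insert.1 hG with hGe | hG
    · rw [hGe]; exact ⟨hF, subset_refl _⟩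
    · obtain ⟨g, hg, rfl⟩ := Finset.mem_image.1 hG
      exact ⟨(contract_properFlat_iff f).1 (hp g hg).1, subset_liftF g⟩
  · apply chain_insert
    · intro G hG G' hG'
      obtain ⟨g, hg, rfl⟩ := Finset.mem_image.1 hG
      obtain ⟨g', hg', rfl⟩ := Finset.mem_image.1 hG'
      rcases hch g hg g' hg' with h | h
      · exact Or.inl (liftF_subset_liftF.2 h)
      · exact Or.inr (liftF_subset_liftF.2 h)
    · intro G' hG'
      obtain ⟨g, hg, rfl⟩ := Finset.mem_image.1 hG'
      exact Or.inl (subset_liftF g)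
  · intro G hGp hGF hGcomp
    by_cases hGe : G = F
    · rw [hGe]; exact Finset.mem_insert_self _ _
    · have hlt : liftF F (toSub F G) = G := liftF_toSub hGF
      have hg : toSub F G ∈ c := by
        apply hmax
        · rw [contract_properFlat_iff f, hlt]; exact hGp
        · rw [hcl0, Finset.empty_ssubset, Finset.nonempty_iff_ne_empty]
          intro h
          rw [h] at hlt
          exact hGe (by rw [← hlt, liftF_empty])
        · intro g' hg'
          have := hGcomp (liftF F g')
            (Finset.mem_insert_of_mem (Finset.mem_image_of_mem _ hg'))
          rcases this with h | h
          · exact Or.inl (by rw [← hlt] at h; exact liftF_subset_liftF.1 h)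
          · exact Or.inr (by rw [← hlt] at h; exact liftF_subset_liftF.1 h)
      exact Finset.mem_insert_of_mem (by rw [← hlt]; exact Finset.mem_image_of_mem _ hg)

/-- Conversely, every maximal chain of proper flats with minimum `F` arises from a
facet of the Bergman complex of `f/F`. -/
lemma maxChain_of_coneLift (hF : f.IsProperFlat F) {C : Finset (Finset E)}
    (hM : MaxChain f F C) :
    ∃ c, IsFacet (f.contract F).bergman c ∧ coneLift F c = C := by
  obtain ⟨hFC, hp, hch, hmax⟩ := hM
  have hcl0 : (f.contract F).cl ∅ = ∅ := contract_cl_empty f hF.1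
  refine ⟨(C.erase F).image (toSub F), ?_, ?_⟩
  · rw [bergman_facet_iff]
    refine ⟨⟨?_, ?_⟩, ?_⟩
    · intro g hg
      obtain ⟨G, hG, rfl⟩ := Finset.mem_image.1 hg
      have hGC := Finset.mem_of_mem_erase hG
      have hGF : F ⊆ G := (hp G hGC).2
      have hlt : liftF F (toSub F G) = G := liftF_toSub hGF
      constructor
      · rw [contract_properFlat_iff f, hlt]; exact (hp G hGC).1
      · rw [hcl0, Finset.empty_ssubset, Finset.nonempty_iff_ne_empty]
        intro h
        rw [h, liftF_empty] at hlt
        exact (Finset.mem_erase.1 hG).1 hlt.symm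
    · intro g hg g' hg'
      obtain ⟨G, hG, rfl⟩ := Finset.mem_image.1 hg
      obtain ⟨G', hG', rfl⟩ := Finset.mem_image.1 hg'
      rcases hch G (Finset.mem_of_mem_erase hG) G' (Finset.mem_of_mem_erase hG') with h | h
      · exact Or.inl (toSub_mono h)
      · exact Or.inr (toSub_mono h)
    · intro g hgp hgv hgcomp
      have hGp : f.IsProperFlat (liftF F g) := (contract_properFlat_iff f).1 hgp
      have hGC : liftF F g ∈ C := by
        apply hmax _ hGp (subset_liftF g)
        intro G' hG'
        by_cases hG'F : G' = F
        · rw [hG'F]; exact Or.inr (subset_liftF g)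
        · have hG'F' : F ⊆ G' := (hp G' hG').2
          have := hgcomp (toSub F G')
            (Finset.mem_image_of_mem _ (Finset.mem_erase.2 ⟨hG'F, hG'⟩))
          rcases this with h | h
          · exact Or.inl (by rw [← liftF_toSub hG'F']; exact liftF_subset_liftF.2 h)
          · exact Or.inr (by rw [← liftF_toSub hG'F']; exact liftF_subset_liftF.2 h)
      have hne : liftF F g ≠ F := by
        intro h
        rw [liftF_eq_iff.1 h, hcl0] at hgv
        exact hgv.2 (Finset.empty_subset _)
      have : liftF F g ∈ C.erase F := Finset.mem_erase.2 ⟨hne, hGC⟩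
      have := Finset.mem_image_of_mem (toSub F) this
      rwa [toSub_liftF] at this
  · rw [coneLift, Finset.image_image]
    have himg : (C.erase F).image (liftF F ∘ toSub F) = C.erase F := by
      rw [show liftF F ∘ toSub F = fun G => liftF F (toSub F G) from rfl]
      have : ∀ G ∈ C.erase F, liftF F (toSub F G) = G := fun G hG =>
        liftF_toSub (hp G (Finset.mem_of_mem_erase hG)).2
      calc (C.erase F).image (fun G => liftF F (toSub F G))
          = (C.erase F).image id := Finset.image_congr this
        _ = C.erase F := Finset.image_id
    rw [himg, Finset.insert_erase hFC]

section Blocks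

variable {κ : Type*} {α : Type*} [DecidableEq κ] [DecidableEq α]

lemma flatMap_nodup {K : List κ} {b : κ → List α} {tag : α → κ}
    (htag : ∀ k ∈ K, ∀ s ∈ b k, tag s = k) (hK : K.Nodup)
    (hb : ∀ k ∈ K, (b k).Nodup) : (K.flatMap b).Nodup := by
  induction K with
  | nil => simp
  | cons k K' ih =>
    rw [List.flatMap_cons]
    refine List.Nodup.append (hb k (List.mem_cons_self)) ?_ ?_
    · exact ih (fun k' hk' s hs => htag k' (List.mem_cons_of_mem _ hk') s hs)
        (List.nodup_cons.1 hK).2 (fun k' hk' => hb k' (List.mem_cons_of_mem _ hk'))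
    · intro s hs hs'
      obtain ⟨k', hk', hsk'⟩ := List.mem_flatMap.1 hs'
      have h1 := htag k (List.mem_cons_self) s hs
      have h2 := htag k' (List.mem_cons_of_mem _ hk') s hsk'
      rw [h1] at h2
      exact (List.nodup_cons.1 hK).1 (h2 ▸ hk')

lemma tag_block_mem {K : List κ} {b : κ → List α} {tag : α → κ}
    (htag : ∀ k ∈ K, ∀ s ∈ b k, tag s = k) {s : α} (hs : s ∈ K.flatMap b) :
    tag s ∈ K ∧ s ∈ b (tag s) := by
  obtain ⟨k, hk, hsk⟩ := List.mem_flatMap.1 hs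
  have := htag k hk s hsk
  exact ⟨this ▸ hk, this ▸ hsk⟩

lemma idxOf_flatMap_cross {K : List κ} {b : κ → List α} {tag : α → κ}
    (htag : ∀ k ∈ K, ∀ s ∈ b k, tag s = k) (hK : K.Nodup) :
    ∀ {u v : ℕ} (hu : u < K.length) (hv : v < K.length), u < v →
      ∀ {s t : α}, s ∈ b (K[u]) → t ∈ b (K[v]) →
      (K.flatMap b).idxOf s < (K.flatMap b).idxOf t := by
  induction K with
  | nil =>
    intro u v hu hv huv s t hs ht
    simp at hu
  | cons k K' ih =>
    intro u v hu hv huv s t hs ht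
    rw [List.flatMap_cons]
    obtain ⟨v', rfl⟩ : ∃ v', v = v' + 1 := ⟨v - 1, by omega⟩
    have hv' : v' < K'.length := by simpa using hv
    have htK' : t ∈ b K'[v'] := by simpa using ht
    have htagt : tag t = K'[v'] :=
      htag _ (List.mem_cons_of_mem _ (List.getElem_mem hv')) t htK'
    have htnot : t ∉ b k := by
      intro hmem
      have hke : k = K'[v'] := by
        rw [← htag k (List.mem_cons_self) t hmem, htagt]
      exact (List.nodup_cons.1 hK).1 (hke ▸ List.getElem_mem hv')
    rw [List.idxOf_append_of_notMem htnot]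
    rcases Nat.eq_zero_or_pos u with rfl | hupos
    · have hsk : s ∈ b k := by simpa using hs
      rw [List.idxOf_append_of_mem hsk]
      have h9 := List.idxOf_lt_length_iff.2 hsk
      omega
    · obtain ⟨u', rfl⟩ : ∃ u', u = u' + 1 := ⟨u - 1, by omega⟩
      have hu' : u' < K'.length := by simpa using hu
      have hsK' : s ∈ b K'[u'] := by simpa using hs
      have htags : tag s = K'[u'] :=
        htag _ (List.mem_cons_of_mem _ (List.getElem_mem hu')) s hsK'
      have hsnot : s ∉ b k := by
        intro hmem
        have hke : k = K'[u'] := by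
          rw [← htag k (List.mem_cons_self) s hmem, htags]
        exact (List.nodup_cons.1 hK).1 (hke ▸ List.getElem_mem hu')
      rw [List.idxOf_append_of_notMem hsnot]
      have h9 := ih (fun k' hk' x hx => htag k' (List.mem_cons_of_mem _ hk') x hx)
        (List.nodup_cons.1 hK).2 hu' hv' (by omega) hsK' htK'
      omega

lemma idxOf_flatMap_within {K : List κ} {b : κ → List α} {tag : α → κ}
    (htag : ∀ k ∈ K, ∀ s ∈ b k, tag s = k) (hK : K.Nodup)
    (hb : ∀ k ∈ K, (b k).Nodup) {k : κ} (hk : k ∈ K) {s t : α}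
    (hs : s ∈ b k) (ht : t ∈ b k)
    (hst : (b k).idxOf s < (b k).idxOf t) :
    (K.flatMap b).idxOf s < (K.flatMap b).idxOf t := by
  induction K with
  | nil => exact absurd hk (List.not_mem_nil)
  | cons k₀ K' ih =>
    rw [List.flatMap_cons]
    rcases List.mem_cons.1 hk with rfl | hk'
    · rw [List.idxOf_append_of_mem hs, List.idxOf_append_of_mem ht]
      exact hst
    · have hks : k ≠ k₀ := by
        intro h
        exact (List.nodup_cons.1 hK).1 (h ▸ hk')
      have hsnot : s ∉ b k₀ := by
        intro hmem
        have h1 := htag k₀ (List.mem_cons_self) s hmem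
        have h2 := htag k (List.mem_cons_of_mem _ hk') s hs
        exact hks (h2 ▸ h1 ▸ rfl)
      have htnot : t ∉ b k₀ := by
        intro hmem
        have h1 := htag k₀ (List.mem_cons_self) t hmem
        have h2 := htag k (List.mem_cons_of_mem _ hk') t ht
        exact hks (h2 ▸ h1 ▸ rfl)
      rw [List.idxOf_append_of_notMem hsnot, List.idxOf_append_of_notMem htnot]
      have := ih (fun k' hk' x hx => htag k' (List.mem_cons_of_mem _ hk') x hx)
        (List.nodup_cons.1 hK).2 (fun k' hk' => hb k' (List.mem_cons_of_mem _ hk')) hk'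
      omega

end Blocks

section Assembly

variable {E : Type*} [Fintype E] [DecidableEq E]

/-- The list of independent sets with proper closure and of fixed cardinality. -/
noncomputable def cardBlock (f : ClosureOp E) (n : ℕ) : List (Finset E) :=
  ({I | f.Indep I ∧ f.cl I ≠ Finset.univ ∧ I.card = n} : Set (Finset E)).toFinite.toFinset.toList

/-- The independent sets with proper closure, listed by increasing cardinality. -/
noncomputable def indepsL (f : ClosureOp E) : List (Finset E) :=
  (List.range (Fintype.card E + 1)).flatMap (cardBlock f)

/-- The list of bases. -/
noncomputable def basesL (f : ClosureOp E) : List (Finset E) :=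
  ({I | f.Indep I ∧ f.cl I = Finset.univ} : Set (Finset E)).toFinite.toFinset.toList

/-- The list of keys: independent sets with proper closure first (by cardinality),
then the bases. -/
noncomputable def keyL (f : ClosureOp E) : List (Finset E) := indepsL f ++ basesL f

/-- The block of facets associated to an independent set. -/
noncomputable def blockOf (f : ClosureOp E)
    (sh : (F : Finset E) → List (Finset (Finset {x // x ∉ F}))) (I : Finset E) :
    List (Finset (E ⊕ Finset E)) :=
  if f.cl I = Finset.univ then [inl' I]
  else (sh (f.cl I)).map (fun c => inl' I ∪ inr' (coneLift (f.cl I) c))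

/-- The flag-to-basis list of facets of the augmented Bergman complex. -/
noncomputable def bigL (f : ClosureOp E)
    (sh : (F : Finset E) → List (Finset (Finset {x // x ∉ F}))) :
    List (Finset (E ⊕ Finset E)) :=
  (keyL f).flatMap (blockOf f sh)

variable (f : ClosureOp E)
variable (sh : (F : Finset E) → List (Finset (Finset {x // x ∉ F})))

lemma mem_cardBlock {I : Finset E} {n : ℕ} :
    I ∈ cardBlock f n ↔ f.Indep I ∧ f.cl I ≠ Finset.univ ∧ I.card = n := by
  rw [cardBlock, Finset.mem_toList, Set.Finite.mem_toFinset]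
  rfl

lemma mem_indepsL {I : Finset E} :
    I ∈ indepsL f ↔ f.Indep I ∧ f.cl I ≠ Finset.univ := by
  rw [indepsL, List.mem_flatMap]
  constructor
  · rintro ⟨n, -, hI⟩
    exact ⟨((mem_cardBlock f).1 hI).1, ((mem_cardBlock f).1 hI).2.1⟩
  · rintro ⟨h1, h2⟩
    refine ⟨I.card, List.mem_range.2 ?_, (mem_cardBlock f).2 ⟨h1, h2, rfl⟩⟩
    have := Finset.card_le_univ I
    omega

lemma mem_basesL {I : Finset E} :
    I ∈ basesL f ↔ f.Indep I ∧ f.cl I = Finset.univ := by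
  rw [basesL, Finset.mem_toList, Set.Finite.mem_toFinset]
  rfl

lemma mem_keyL {I : Finset E} : I ∈ keyL f ↔ f.Indep I := by
  rw [keyL, List.mem_append, mem_indepsL, mem_basesL]
  constructor
  · rintro (⟨h, -⟩ | ⟨h, -⟩) <;> exact h
  · intro h
    by_cases hcl : f.cl I = Finset.univ
    · exact Or.inr ⟨h, hcl⟩
    · exact Or.inl ⟨h, hcl⟩

lemma indepsL_nodup : (indepsL f).Nodup := by
  refine flatMap_nodup (tag := Finset.card) ?_ (List.nodup_range) ?_
  · intro n _ I hI
    exact ((mem_cardBlock f).1 hI).2.2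
  · intro n _
    exact Finset.nodup_toList _

lemma keyL_nodup : (keyL f).Nodup := by
  refine List.Nodup.append (indepsL_nodup f) (Finset.nodup_toList _) ?_
  intro I hI hI'
  rw [mem_indepsL] at hI
  rw [basesL, Finset.mem_toList, Set.Finite.mem_toFinset] at hI'
  exact hI.2 hI'.2

lemma blockOf_tag {I : Finset E} {s : Finset (E ⊕ Finset E)}
    (hs : s ∈ blockOf f sh I) : ClosureOp.faceIndep s = I := by
  rw [blockOf] at hs
  split at hs
  · rw [List.mem_singleton] at hs
    subst hs
    rw [show inl' I = inl' I ∪ inr' ∅ by simp, faceIndep_union]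
  · obtain ⟨c, -, rfl⟩ := List.mem_map.1 hs
    rw [faceIndep_union]

/-- Entries of the `sh`-shelling are facets of the contraction's Bergman complex. -/
lemma sh_facet (Hsh : ∀ F : Finset E, f.IsProperFlat F →
      IsShelling (f.contract F).bergman (sh F))
    {F : Finset E} (hF : f.IsProperFlat F) {c : Finset (Finset {x // x ∉ F})} :
    c ∈ sh F ↔ IsFacet (f.contract F).bergman c := (Hsh F hF).2.1 c

lemma empty_not_mem_facet {F : Finset E} (hF : f.IsProperFlat F)
    {c : Finset (Finset {x // x ∉ F})} (hc : IsFacet (f.contract F).bergman c) :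
    ∅ ∉ c := by
  intro h
  have h2 := ((bergman_facet_iff (f.contract F) c).1 hc).1.1 ∅ h
  rw [contract_cl_empty f hF.1] at h2
  exact h2.2.2 (subset_refl _)

lemma blockOf_nodup (Hsh : ∀ F : Finset E, f.IsProperFlat F →
      IsShelling (f.contract F).bergman (sh F))
    {I : Finset E} : (blockOf f sh I).Nodup := by
  rw [blockOf]
  split
  · exact List.nodup_singleton _
  · rename_i hcl
    have hF : f.IsProperFlat (f.cl I) := properFlat_cl f hcl
    refine List.Nodup.map_on ?_ (Hsh _ hF).1
    intro c hc c' hc' hcc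
    have h1 := congrArg ClosureOp.faceFlag hcc
    rw [faceFlag_union, faceFlag_union] at h1
    exact coneLift_inj
      (empty_not_mem_facet f hF ((sh_facet f sh Hsh hF).1 hc))
      (empty_not_mem_facet f hF ((sh_facet f sh Hsh hF).1 hc')) h1

lemma bigL_nodup (Hsh : ∀ F : Finset E, f.IsProperFlat F →
      IsShelling (f.contract F).bergman (sh F)) : (bigL f sh).Nodup :=
  flatMap_nodup (tag := ClosureOp.faceIndep)
    (fun _ _ s hs => blockOf_tag f sh hs) (keyL_nodup f)
    (fun _ _ => blockOf_nodup f sh Hsh)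

/-- The entries of `bigL` are exactly the facets of the augmented Bergman complex. -/
lemma bigL_mem_iff (Hsh : ∀ F : Finset E, f.IsProperFlat F →
      IsShelling (f.contract F).bergman (sh F)) (s : Finset (E ⊕ Finset E)) :
    s ∈ bigL f sh ↔ IsFacet f.augBergman s := by
  constructor
  · intro hs
    obtain ⟨I, hI, hsI⟩ := List.mem_flatMap.1 hs
    have hind : f.Indep I := (mem_keyL f).1 hI
    rw [blockOf] at hsI
    split at hsI
    · rename_i hcl
      rw [List.mem_singleton] at hsI
      subst hsI
      exact facet_basis f hind hcl
    · rename_i hcl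
      have hF : f.IsProperFlat (f.cl I) := properFlat_cl f hcl
      obtain ⟨c, hc, rfl⟩ := List.mem_map.1 hsI
      exact facet_flag f hind
        (maxChain_coneLift f hF ((sh_facet f sh Hsh hF).1 hc))
  · intro hs
    obtain ⟨hind, hcase⟩ := facet_cases f hs
    rw [bigL, List.mem_flatMap]
    rcases hcase with ⟨hcl, hflag⟩ | ⟨hcl, hM⟩
    · refine ⟨ClosureOp.faceIndep s, (mem_keyL f).2 hind, ?_⟩
      rw [blockOf, if_pos hcl, List.mem_singleton]
      conv_lhs => rw [decomp s, hflag]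
      simp
    · have hF : f.IsProperFlat (f.cl (ClosureOp.faceIndep s)) := properFlat_cl f hcl
      obtain ⟨c, hcfac, hcC⟩ := maxChain_of_coneLift f hF hM
      refine ⟨ClosureOp.faceIndep s, (mem_keyL f).2 hind, ?_⟩
      rw [blockOf, if_neg hcl, List.mem_map]
      refine ⟨c, (sh_facet f sh Hsh hF).2 hcfac, ?_⟩
      rw [hcC, ← decomp s]

end Assembly

end FTB

/-! ### Shellings and the exchange property -/

namespace FTB

section Shell

variable {V : Type*} [DecidableEq V]

/-- The exchange form of the shelling condition. -/
def Exch (l : List (Finset V)) : Prop :=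
  ∀ (i j : ℕ) (hi : i < l.length) (hj : j < i),
    ∃ (k : ℕ) (hk : k < i),
      (l[j]'(hj.trans hi)) ∩ l[i] ⊆ (l[k]'(hk.trans hi)) ∩ l[i] ∧
      ((l[k]'(hk.trans hi)) ∩ l[i]).card + 1 = l[i].card

lemma mem_take_of_lt {α : Type*} {l : List α} {i j : ℕ} (hj : j < i) (hi : i < l.length) :
    l[j]'(hj.trans hi) ∈ l.take i := by
  have h1 : j < (l.take i).length := by
    rw [List.length_take]; omega
  have h2 := List.getElem_mem h1
  rwa [List.getElem_take] at h2

lemma exists_getElem_of_mem_take {α : Type*} {l : List α} {i : ℕ} {s : α}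
    (hs : s ∈ l.take i) : ∃ (j : ℕ) (hj : j < i) (hjl : j < l.length), l[j] = s := by
  obtain ⟨j, hj, he⟩ := List.mem_iff_getElem.1 hs
  rw [List.length_take] at hj
  have hj1 : j < i := lt_of_lt_of_le hj (min_le_left _ _)
  have hj2 : j < l.length := lt_of_lt_of_le hj (min_le_right _ _)
  refine ⟨j, hj1, hj2, ?_⟩
  rwa [List.getElem_take] at he

lemma exch_of_isShelling {Δ : Set (Finset V)} {l : List (Finset V)}
    (h : IsShelling Δ l) : Exch l := by
  classical
  obtain ⟨hnd, hmem, hpure⟩ := h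
  intro i j hi hj
  obtain ⟨-, hcard⟩ := hpure i hi (lt_of_le_of_lt (Nat.zero_le j) hj)
  set X : Set (Finset V) :=
    {t | ∃ s ∈ l.take i, t ⊆ s} ∩ {t | t ⊆ l[i]} with hX
  have ht0 : (l[j]'(hj.trans hi)) ∩ l[i] ∈ X :=
    ⟨⟨l[j]'(hj.trans hi), mem_take_of_lt hj hi, Finset.inter_subset_left⟩,
      Finset.inter_subset_right⟩
  set S : Finset (Finset V) :=
    (l[i].powerset).filter (fun t => t ∈ X ∧ (l[j]'(hj.trans hi)) ∩ l[i] ⊆ t) with hS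
  have hS0 : (l[j]'(hj.trans hi)) ∩ l[i] ∈ S :=
    Finset.mem_filter.2 ⟨Finset.mem_powerset.2 Finset.inter_subset_right,
      ht0, subset_refl _⟩
  obtain ⟨t, htS, htmax⟩ := Finset.exists_max_image S Finset.card ⟨_, hS0⟩
  rw [hS, Finset.mem_filter, Finset.mem_powerset] at htS
  obtain ⟨hti, htX, htj⟩ := htS
  have hfac : IsFacet X t := by
    refine ⟨htX, fun u hu hsub => ?_⟩
    have huS : u ∈ S := Finset.mem_filter.2
      ⟨Finset.mem_powerset.2 hu.2, hu, htj.trans hsub⟩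
    exact Finset.eq_of_subset_of_card_le hsub (htmax u huS)
  have hcard' := hcard t hfac
  obtain ⟨s, hs, hts⟩ := htX.1
  obtain ⟨k, hk, hkl, hke⟩ := exists_getElem_of_mem_take hs
  have htk : t ⊆ (l[k]'hkl) ∩ l[i] :=
    Finset.subset_inter (by rw [hke]; exact hts) htX.2
  have hcardn : t.card + 1 = l[i].card := by omega
  have hfinal : (l[k]'hkl) ∩ l[i] = t := by
    by_cases heq : (l[k]'hkl) ∩ l[i] = t
    · exact heq
    · exfalso
      have hss : t ⊂ (l[k]'hkl) ∩ l[i] :=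
        Finset.ssubset_iff_subset_ne.2 ⟨htk, fun h => heq h.symm⟩
      have h1 : t.card < ((l[k]'hkl) ∩ l[i]).card := Finset.card_lt_card hss
      have h2 : ((l[k]'hkl) ∩ l[i]).card ≤ l[i].card :=
        Finset.card_le_card Finset.inter_subset_right
      have h3 : ((l[k]'hkl) ∩ l[i]).card = l[i].card := by omega
      have h4 : (l[k]'hkl) ∩ l[i] = l[i] :=
        Finset.eq_of_subset_of_card_le Finset.inter_subset_right (le_of_eq h3.symm)
      have h5 : l[i] ⊆ l[k]'hkl := Finset.inter_eq_right.1 h4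
      have hfi : IsFacet Δ l[i] := (hmem _).1 (List.getElem_mem hi)
      have hfk : l[k]'hkl ∈ Δ := ((hmem _).1 (List.getElem_mem hkl)).1
      have h6 : l[i] = l[k]'hkl := hfi.2 _ hfk h5
      have := (hnd.getElem_inj_iff).1 h6.symm
      omega
  refine ⟨k, hk, ?_, ?_⟩
  · rw [hfinal]; exact htj
  · rw [hfinal]; exact hcardn

lemma isShelling_of {Δ : Set (Finset V)} {l : List (Finset V)} (hnd : l.Nodup)
    (hmem : ∀ s, s ∈ l ↔ IsFacet Δ s) (hex : Exch l) : IsShelling Δ l := by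
  refine ⟨hnd, hmem, ?_⟩
  intro i hi hpos
  constructor
  · exact ⟨∅, ⟨l[0]'(hpos.trans hi), mem_take_of_lt hpos hi, Finset.empty_subset _⟩,
      Finset.empty_subset _⟩
  · intro t hfac
    obtain ⟨⟨s, hs, hts⟩, hti⟩ := hfac.1
    obtain ⟨j, hj, hjl, hje⟩ := exists_getElem_of_mem_take hs
    obtain ⟨k, hk, hsub, hcard⟩ := hex i j hi hj
    have htjk : t ⊆ (l[k]'(hk.trans hi)) ∩ l[i] := by
      refine subset_trans ?_ hsub
      exact Finset.subset_inter (by rw [hje]; exact hts) hti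
    have hmem2 : (l[k]'(hk.trans hi)) ∩ l[i] ∈
        ({t | ∃ s ∈ l.take i, t ⊆ s} ∩ {t | t ⊆ l[i]} : Set (Finset V)) :=
      ⟨⟨l[k]'(hk.trans hi), mem_take_of_lt hk hi, Finset.inter_subset_left⟩,
        Finset.inter_subset_right⟩
    have heq := hfac.2 _ hmem2 htjk
    rw [← heq] at hcard
    push_cast
    omega

end Shell



section Positions

variable {E : Type*} [Fintype E] [DecidableEq E]
variable (f : ClosureOp E)
variable (sh : (F : Finset E) → List (Finset (Finset {x // x ∉ F})))

lemma bigL_def : bigL f sh = (keyL f).flatMap (blockOf f sh) := rfl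

lemma card_lt_range_length {I : Finset E} :
    I.card < Fintype.card E + 1 := by
  have := Finset.card_le_univ I
  omega

lemma indepsL_indexOf_lt {J I : Finset E} (hJ : J ∈ indepsL f) (hI : I ∈ indepsL f)
    (hcard : J.card < I.card) : (indepsL f).idxOf J < (indepsL f).idxOf I := by
  have hJ' : J ∈ cardBlock f J.card := by
    obtain ⟨h1, h2⟩ := (mem_indepsL f).1 hJ
    exact (mem_cardBlock f).2 ⟨h1, h2, rfl⟩
  have hI' : I ∈ cardBlock f I.card := by
    obtain ⟨h1, h2⟩ := (mem_indepsL f).1 hI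
    exact (mem_cardBlock f).2 ⟨h1, h2, rfl⟩
  have hu : J.card < (List.range (Fintype.card E + 1)).length := by
    rw [List.length_range]; exact card_lt_range_length
  have hv : I.card < (List.range (Fintype.card E + 1)).length := by
    rw [List.length_range]; exact card_lt_range_length
  have := idxOf_flatMap_cross (K := List.range (Fintype.card E + 1))
    (b := cardBlock f) (tag := Finset.card)
    (fun n _ I hI => ((mem_cardBlock f).1 hI).2.2) (List.nodup_range)
    hu hv hcard (s := J) (t := I) ?_ ?_
  · exact this
  · rw [List.getElem_range]; exact hJ'
  · rw [List.getElem_range]; exact hI'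

lemma indepsL_sorted {u v : ℕ} (hu : u < (indepsL f).length)
    (hv : v < (indepsL f).length) (huv : u < v) :
    ((indepsL f)[u]).card ≤ ((indepsL f)[v]).card := by
  by_contra hlt
  push_neg at hlt
  have hs : (indepsL f)[u] ∈ indepsL f := List.getElem_mem hu
  have ht : (indepsL f)[v] ∈ indepsL f := List.getElem_mem hv
  have h1 := indepsL_indexOf_lt f ht hs hlt
  rw [List.Nodup.idxOf_getElem (indepsL_nodup f) u hu,
    List.Nodup.idxOf_getElem (indepsL_nodup f) v hv] at h1
  omega

lemma keyL_indexOf_indeps {I : Finset E} (hI : I ∈ indepsL f) :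
    (keyL f).idxOf I = (indepsL f).idxOf I ∧
      (keyL f).idxOf I < (indepsL f).length := by
  rw [keyL, List.idxOf_append_of_mem hI]
  exact ⟨rfl, List.idxOf_lt_length_iff.2 hI⟩

lemma keyL_indexOf_of_cl_univ {I : Finset E} (hcl : f.cl I = Finset.univ) :
    (indepsL f).length ≤ (keyL f).idxOf I := by
  have hInd : I ∉ indepsL f := by
    intro h
    exact ((mem_indepsL f).1 h).2 hcl
  rw [keyL, List.idxOf_append_of_notMem hInd]
  omega

lemma mem_indepsL_of_keyL_indexOf_lt {I : Finset E}
    (hlt : (keyL f).idxOf I < (indepsL f).length) : I ∈ indepsL f := by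
  by_contra h
  rw [keyL, List.idxOf_append_of_notMem h] at hlt
  omega

lemma keyL_lt {J I : Finset E} (hJ : J ∈ indepsL f) (hI : I ∈ keyL f)
    (hcard : J.card < I.card) : (keyL f).idxOf J < (keyL f).idxOf I := by
  by_cases hcl : f.cl I = Finset.univ
  · exact lt_of_lt_of_le (keyL_indexOf_indeps f hJ).2 (keyL_indexOf_of_cl_univ f hcl)
  · have hIi : I ∈ indepsL f := (mem_indepsL f).2 ⟨(mem_keyL f).1 hI, hcl⟩
    rw [keyL, List.idxOf_append_of_mem hJ, List.idxOf_append_of_mem hIi]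
    exact indepsL_indexOf_lt f hJ hIi hcard

lemma earlier_block {J I : Finset E} (hJ : J ∈ keyL f) (hI : I ∈ keyL f)
    (hlt : (keyL f).idxOf J < (keyL f).idxOf I)
    {s t : Finset (E ⊕ Finset E)} (hs : s ∈ blockOf f sh J) (ht : t ∈ blockOf f sh I) :
    (bigL f sh).idxOf s < (bigL f sh).idxOf t := by
  have hu := List.idxOf_lt_length_iff.2 hJ
  have hv := List.idxOf_lt_length_iff.2 hI
  rw [bigL_def]
  refine idxOf_flatMap_cross (tag := ClosureOp.faceIndep)
    (fun _ _ x hx => blockOf_tag f sh hx) (keyL_nodup f) hu hv hlt ?_ ?_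
  · rw [List.getElem_idxOf hu]; exact hs
  · rw [List.getElem_idxOf hv]; exact ht

lemma bigL_tag_mem {s : Finset (E ⊕ Finset E)} (hs : s ∈ bigL f sh) :
    ClosureOp.faceIndep s ∈ keyL f ∧ s ∈ blockOf f sh (ClosureOp.faceIndep s) :=
  tag_block_mem (fun _ _ x hx => blockOf_tag f sh hx) hs

lemma bigL_order (Hsh : ∀ F : Finset E, f.IsProperFlat F →
      IsShelling (f.contract F).bergman (sh F))
    {i j : ℕ} (hi : i < (bigL f sh).length) (hj : j < i) :
    ClosureOp.faceIndep ((bigL f sh)[j]'(hj.trans hi)) =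
        ClosureOp.faceIndep ((bigL f sh)[i]) ∨
      (ClosureOp.faceIndep ((bigL f sh)[j]'(hj.trans hi)) ≠
          ClosureOp.faceIndep ((bigL f sh)[i]) ∧
        (keyL f).idxOf (ClosureOp.faceIndep ((bigL f sh)[j]'(hj.trans hi))) <
          (keyL f).idxOf (ClosureOp.faceIndep ((bigL f sh)[i]))) := by
  set s := (bigL f sh)[j]'(hj.trans hi) with hsdef
  set t := (bigL f sh)[i] with htdef
  have hsm : s ∈ bigL f sh := List.getElem_mem _
  have htm : t ∈ bigL f sh := List.getElem_mem _
  obtain ⟨hsK, hsb⟩ := bigL_tag_mem f sh hsm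
  obtain ⟨htK, htb⟩ := bigL_tag_mem f sh htm
  by_cases heq : ClosureOp.faceIndep s = ClosureOp.faceIndep t
  · exact Or.inl heq
  · refine Or.inr ⟨heq, ?_⟩
    rcases lt_trichotomy ((keyL f).idxOf (ClosureOp.faceIndep s))
      ((keyL f).idxOf (ClosureOp.faceIndep t)) with h | h | h
    · exact h
    · exfalso
      apply heq
      have h1 := List.getElem_idxOf (List.idxOf_lt_length_iff.2 hsK)
      have h2 := List.getElem_idxOf (List.idxOf_lt_length_iff.2 htK)
      rw [← h1, ← h2]
      congr 1
    · exfalso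
      have h3 := earlier_block f sh htK hsK h htb hsb
      rw [List.Nodup.idxOf_getElem (bigL_nodup f sh Hsh) i hi,
        List.Nodup.idxOf_getElem (bigL_nodup f sh Hsh) j (hj.trans hi)] at h3
      omega

end Positions

section MainExchange

variable {E : Type*} [Fintype E] [DecidableEq E]
variable (f : ClosureOp E)
variable (sh : (F : Finset E) → List (Finset (Finset {x // x ∉ F})))

lemma coneLift_mono {F : Finset E} {c d : Finset (Finset {x // x ∉ F})} (h : c ⊆ d) :
    coneLift F c ⊆ coneLift F d :=
  Finset.insert_subset_insert _ (Finset.image_subset_image h)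

lemma bigL_exch (Hsh : ∀ F : Finset E, f.IsProperFlat F →
      IsShelling (f.contract F).bergman (sh F)) : Exch (bigL f sh) := by
  intro i j hi hj
  have hnd := bigL_nodup f sh Hsh
  set L := bigL f sh with hLdef
  have hij := hj.trans hi
  have hsm : L[j]'hij ∈ L := List.getElem_mem _
  have htm : L[i]'hi ∈ L := List.getElem_mem _
  obtain ⟨hsK, hsb⟩ := bigL_tag_mem f sh hsm
  obtain ⟨htK, htb⟩ := bigL_tag_mem f sh htm
  have hIind : f.Indep (ClosureOp.faceIndep (L[i]'hi)) := (mem_keyL f).1 htK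
  have hI'ind : f.Indep (ClosureOp.faceIndep (L[j]'hij)) := (mem_keyL f).1 hsK
  have hst : L[j]'hij ≠ L[i]'hi := by
    intro hcontra
    have := (hnd.getElem_inj_iff).1 hcontra
    omega
  rcases bigL_order f sh Hsh hi hj with heq | ⟨hne, hlt⟩
  · -- same independent part
    set I0 := ClosureOp.faceIndep (L[i]'hi) with hI0
    by_cases hcl : f.cl I0 = Finset.univ
    · exfalso
      rw [heq] at hsb
      rw [blockOf, if_pos hcl, List.mem_singleton] at hsb htb
      exact hst (hsb.trans htb.symm)
    · set F0 := f.cl I0 with hF0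
      have hFp : f.IsProperFlat F0 := properFlat_cl f hcl
      rw [heq] at hsb
      rw [blockOf, if_neg hcl] at hsb htb
      obtain ⟨p', hp', hpe'⟩ := List.mem_iff_getElem.1 hsb
      obtain ⟨p, hp, hpe⟩ := List.mem_iff_getElem.1 htb
      have hbnodup : (blockOf f sh I0).Nodup := blockOf_nodup f sh Hsh
      rw [blockOf, if_neg hcl] at hbnodup
      have hidxs : ((sh F0).map (fun c => inl' I0 ∪ inr' (coneLift F0 c))).idxOf
          (L[j]'hij) = p' := by
        have h0 := List.Nodup.idxOf_getElem hbnodup p' hp'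
        rwa [hpe'] at h0
      have hidxt : ((sh F0).map (fun c => inl' I0 ∪ inr' (coneLift F0 c))).idxOf
          (L[i]'hi) = p := by
        have h0 := List.Nodup.idxOf_getElem hbnodup p hp
        rwa [hpe] at h0
      have hglobal : ∀ {x y : Finset (E ⊕ Finset E)},
          x ∈ blockOf f sh I0 → y ∈ blockOf f sh I0 →
          (blockOf f sh I0).idxOf x < (blockOf f sh I0).idxOf y →
          L.idxOf x < L.idxOf y := by
        intro x y hx hy hxy
        rw [hLdef, bigL_def]
        exact idxOf_flatMap_within (tag := ClosureOp.faceIndep)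
          (fun _ _ z hz => blockOf_tag f sh hz) (keyL_nodup f)
          (fun _ _ => blockOf_nodup f sh Hsh) htK hx hy hxy
      have hblock_eq : blockOf f sh I0 =
          (sh F0).map (fun c => inl' I0 ∪ inr' (coneLift F0 c)) := by
        rw [blockOf, if_neg hcl]
      have hsb' : L[j]'hij ∈ blockOf f sh I0 := by rw [hblock_eq]; exact hsb
      have htb' : L[i]'hi ∈ blockOf f sh I0 := by rw [hblock_eq]; exact htb
      have hpp : p' < p := by
        rcases lt_trichotomy p' p with h | h | h
        · exact h
        · exfalso
          subst h
          apply hst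
          rw [← hpe', ← hpe]
        · exfalso
          have h6 := hglobal htb' hsb' (by rw [hblock_eq, hidxs, hidxt]; exact h)
          rw [List.Nodup.idxOf_getElem hnd i hi, List.Nodup.idxOf_getElem hnd j hij] at h6
          omega
      have hlen : p < (sh F0).length := by
        rw [List.length_map] at hp; exact hp
      obtain ⟨q, hq, hsubc, hcardc⟩ := exch_of_isShelling (Hsh _ hFp) p p' hlen hpp
      have hqlen : q < ((sh F0).map (fun c => inl' I0 ∪ inr' (coneLift F0 c))).length := by
        rw [List.length_map]; omega
      set σ'' := ((sh F0).map (fun c => inl' I0 ∪ inr' (coneLift F0 c)))[q]'hqlen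
        with hσdef
      have hσb : σ'' ∈ blockOf f sh I0 := by
        rw [hblock_eq]
        exact List.getElem_mem _
      have hσm : σ'' ∈ L := by
        rw [hLdef, bigL_def]
        exact List.mem_flatMap.2 ⟨_, htK, hσb⟩
      have hσidx : ((sh F0).map (fun c => inl' I0 ∪ inr' (coneLift F0 c))).idxOf σ'' = q :=
        List.Nodup.idxOf_getElem hbnodup q hqlen
      have hmlt : L.idxOf σ'' < i := by
        have h5 := hglobal hσb htb' (by rw [hblock_eq, hidxt, hσidx]; omega)
        rwa [List.Nodup.idxOf_getElem hnd i hi] at h5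
      refine ⟨L.idxOf σ'', hmlt, ?_⟩
      have hmlen : L.idxOf σ'' < L.length := List.idxOf_lt_length_iff.2 hσm
      have hLm : L[L.idxOf σ'']'(hmlt.trans hi) = σ'' := List.getElem_idxOf hmlen
      have hc1 : ∅ ∉ (sh F0)[p']'(hpp.trans hlen) :=
        empty_not_mem_facet f hFp ((sh_facet f sh Hsh hFp).1 (List.getElem_mem _))
      have hc2 : ∅ ∉ (sh F0)[p]'hlen :=
        empty_not_mem_facet f hFp ((sh_facet f sh Hsh hFp).1 (List.getElem_mem _))
      have hc3 : ∅ ∉ (sh F0)[q]'(hq.trans hlen) :=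
        empty_not_mem_facet f hFp ((sh_facet f sh Hsh hFp).1 (List.getElem_mem _))
      have hse : L[j]'hij = inl' I0 ∪ inr' (coneLift F0 ((sh F0)[p']'(hpp.trans hlen))) := by
        rw [← hpe', List.getElem_map]
      have hte : L[i]'hi = inl' I0 ∪ inr' (coneLift F0 ((sh F0)[p]'hlen)) := by
        rw [← hpe, List.getElem_map]
      have hσe : σ'' = inl' I0 ∪ inr' (coneLift F0 ((sh F0)[q]'(hq.trans hlen))) := by
        rw [hσdef, List.getElem_map]
      constructor
      · rw [hLm, hse, hte, hσe, union_inter_union, union_inter_union,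
          Finset.inter_self, coneLift_inter, coneLift_inter]
        exact union_subset_union_iff.2 ⟨subset_refl _, coneLift_mono hsubc⟩
      · rw [hLm, hte, hσe, union_inter_union, Finset.inter_self, coneLift_inter,
          card_union', card_union', coneLift_card (fun hmem =>
            hc3 (Finset.mem_inter.1 hmem).1), coneLift_card hc2]
        omega
  · -- different independent parts
    have hnotsub : ¬ ClosureOp.faceIndep (L[i]'hi) ⊆ ClosureOp.faceIndep (L[j]'hij) := by
      intro hsub'
      have hss : ClosureOp.faceIndep (L[i]'hi) ⊂ ClosureOp.faceIndep (L[j]'hij) :=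
        Finset.ssubset_iff_subset_ne.2 ⟨hsub', fun hcontra => hne hcontra.symm⟩
      by_cases hclI : f.cl (ClosureOp.faceIndep (L[i]'hi)) = Finset.univ
      · obtain ⟨x, hxI', hxI⟩ := Finset.exists_of_ssubset hss
        have h1 : insert x (ClosureOp.faceIndep (L[i]'hi)) ⊆
            ClosureOp.faceIndep (L[j]'hij) := Finset.insert_subset hxI' hss.1
        have h2 := indep_insert_growth f (indep_subset f hI'ind h1) hxI
        rw [hclI] at h2
        exact h2.2 (Finset.subset_univ _)
      · have hIi : ClosureOp.faceIndep (L[i]'hi) ∈ indepsL f :=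
          (mem_indepsL f).2 ⟨hIind, hclI⟩
        have hvlt := (keyL_indexOf_indeps f hIi).2
        have hI'i : ClosureOp.faceIndep (L[j]'hij) ∈ indepsL f :=
          mem_indepsL_of_keyL_indexOf_lt f (hlt.trans hvlt)
        have e1 := (keyL_indexOf_indeps f hI'i).1
        have e2 := (keyL_indexOf_indeps f hIi).1
        have h3 : (indepsL f).idxOf (ClosureOp.faceIndep (L[j]'hij)) <
            (indepsL f).idxOf (ClosureOp.faceIndep (L[i]'hi)) := by
          rw [← e1, ← e2]; exact hlt
        have h4 := indepsL_sorted f (List.idxOf_lt_length_iff.2 hI'i)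
          (List.idxOf_lt_length_iff.2 hIi) h3
        rw [List.getElem_idxOf (List.idxOf_lt_length_iff.2 hI'i),
          List.getElem_idxOf (List.idxOf_lt_length_iff.2 hIi)] at h4
        have h5 := Finset.card_lt_card hss
        omega
    obtain ⟨a, haI, haI'⟩ := Finset.not_subset.1 hnotsub
    set J0 := (ClosureOp.faceIndep (L[i]'hi)).erase a with hJ0
    have hJsub : J0 ⊆ ClosureOp.faceIndep (L[i]'hi) := by
      rw [hJ0]; exact Finset.erase_subset _ _
    have hJind : f.Indep J0 := indep_subset f hIind hJsub
    have hclJ : f.cl J0 ⊂ f.cl (ClosureOp.faceIndep (L[i]'hi)) := hIind a haI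
    have hclJne : f.cl J0 ≠ Finset.univ := by
      intro hcontra
      rw [hcontra] at hclJ
      exact hclJ.2 (Finset.subset_univ _)
    have htfacet : IsFacet f.augBergman (L[i]'hi) := (bigL_mem_iff f sh Hsh _).1 htm
    have htB := htfacet.1
    rw [mem_augBergman_iff] at htB
    obtain ⟨-, hCp, hCch, hCcl⟩ := htB
    obtain ⟨D, hMD, hCD⟩ := exists_maxChain f (properFlat_cl f hclJne)
      (C := ClosureOp.faceFlag (L[i]'hi))
      (fun G hG => ⟨hCp G hG, hclJ.subset.trans (hCcl G hG)⟩) hCch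
    have hfac'' : IsFacet f.augBergman (inl' J0 ∪ inr' D) := facet_flag f hJind hMD
    have hmem'' : (inl' J0 ∪ inr' D) ∈ L := (bigL_mem_iff f sh Hsh _).2 hfac''
    obtain ⟨h''K, h''b⟩ := bigL_tag_mem f sh hmem''
    rw [faceIndep_union] at h''b
    have hJi : J0 ∈ indepsL f := (mem_indepsL f).2 ⟨hJind, hclJne⟩
    have hIpos : 0 < (ClosureOp.faceIndep (L[i]'hi)).card := Finset.card_pos.2 ⟨a, haI⟩
    have hJcard : J0.card = (ClosureOp.faceIndep (L[i]'hi)).card - 1 := by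
      rw [hJ0, Finset.card_erase_of_mem haI]
    have hcardJ : J0.card < (ClosureOp.faceIndep (L[i]'hi)).card := by omega
    have hkey : (keyL f).idxOf J0 < (keyL f).idxOf (ClosureOp.faceIndep (L[i]'hi)) :=
      keyL_lt f hJi htK hcardJ
    have hm1 : L.idxOf (inl' J0 ∪ inr' D) < i := by
      have h6 := earlier_block f sh (List.mem_append.2 (Or.inl hJi)) htK hkey h''b htb
      rwa [← hLdef, List.Nodup.idxOf_getElem hnd i hi] at h6
    refine ⟨_, hm1, ?_⟩
    have hmlen := List.idxOf_lt_length_iff.2 hmem''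
    have hLm : L[L.idxOf (inl' J0 ∪ inr' D)]'(hm1.trans hi) = inl' J0 ∪ inr' D :=
      List.getElem_idxOf hmlen
    have e2 : (inl' J0 ∪ inr' D) ∩ (L[i]'hi) =
        inl' J0 ∪ inr' (ClosureOp.faceFlag (L[i]'hi)) := by
      conv_lhs => rw [decomp (L[i]'hi)]
      rw [union_inter_union, Finset.inter_eq_left.2 hJsub,
        Finset.inter_eq_right.2 hCD]
    have e1 : (L[j]'hij) ∩ (L[i]'hi) =
        inl' (ClosureOp.faceIndep (L[j]'hij) ∩ ClosureOp.faceIndep (L[i]'hi)) ∪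
          inr' (ClosureOp.faceFlag (L[j]'hij) ∩ ClosureOp.faceFlag (L[i]'hi)) := by
      conv_lhs => rw [decomp (L[j]'hij), decomp (L[i]'hi)]
      exact union_inter_union
    constructor
    · rw [hLm, e1, e2]
      refine union_subset_union_iff.2 ⟨?_, Finset.inter_subset_right⟩
      intro x hx
      obtain ⟨hx1, hx2⟩ := Finset.mem_inter.1 hx
      rw [hJ0]
      exact Finset.mem_erase.2 ⟨fun hxa => haI' (hxa ▸ hx1), hx2⟩
    · rw [hLm, e2, card_union']
      conv_rhs => rw [decomp (L[i]'hi), card_union']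
      omega

end MainExchange

section PrefSuf

variable {E : Type*} [Fintype E] [DecidableEq E]
variable (f : ClosureOp E)
variable (sh : (F : Finset E) → List (Finset (Finset {x // x ∉ F})))

lemma bigL_prefix (Hsh : ∀ F : Finset E, f.IsProperFlat F →
      IsShelling (f.contract F).bergman (sh F)) :
    PrefixProp (bigL f sh) (fun s => ∀ v ∈ s, ∃ F : Finset E, v = Sum.inr F) := by
  intro i j hi hj hij hP
  set L := bigL f sh with hLdef
  have hIj : ClosureOp.faceIndep (L[j]'hj) = ∅ := by
    rw [Finset.eq_empty_iff_forall_notMem]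
    intro a ha
    have hmem : Sum.inl a ∈ L[j]'hj := Finset.mem_preimage.1 ha
    obtain ⟨F, hF⟩ := hP _ hmem
    exact Sum.inl_ne_inr hF
  rcases bigL_order f sh Hsh hj hij with heq | ⟨hne, hlt⟩
  · -- same independent part, hence empty
    intro v hv
    rw [decomp (L[i]'(hij.trans hj))] at hv
    rcases v with a | F
    · exfalso
      rw [Finset.mem_union] at hv
      rcases hv with hv | hv
      · have := mem_inl'.1 hv
        rw [heq, hIj] at this
        exact Finset.notMem_empty _ this
      · exact inl_not_mem_inr' hv
    · exact ⟨F, rfl⟩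
  · exfalso
    rw [hIj] at hlt hne
    have hIK : ClosureOp.faceIndep (L[i]'(hij.trans hj)) ∈ keyL f :=
      (bigL_tag_mem f sh (List.getElem_mem _)).1
    by_cases hcl0 : f.cl ∅ = Finset.univ
    · exact hne (indep_of_cl_empty_univ f hcl0 ((mem_keyL f).1 hIK))
    · have hempty_ind : f.Indep (∅ : Finset E) := by
        intro x hx
        exact absurd hx (Finset.notMem_empty _)
      have h0i : (∅ : Finset E) ∈ indepsL f := (mem_indepsL f).2 ⟨hempty_ind, hcl0⟩
      have hvlt := (keyL_indexOf_indeps f h0i).2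
      have hI'i : ClosureOp.faceIndep (L[i]'(hij.trans hj)) ∈ indepsL f :=
        mem_indepsL_of_keyL_indexOf_lt f (hlt.trans hvlt)
      have e1 := (keyL_indexOf_indeps f hI'i).1
      have e2 := (keyL_indexOf_indeps f h0i).1
      have h3 : (indepsL f).idxOf (ClosureOp.faceIndep (L[i]'(hij.trans hj))) <
          (indepsL f).idxOf (∅ : Finset E) := by
        rw [← e1, ← e2]; exact hlt
      have h4 := indepsL_sorted f (List.idxOf_lt_length_iff.2 hI'i)
        (List.idxOf_lt_length_iff.2 h0i) h3
      rw [List.getElem_idxOf (List.idxOf_lt_length_iff.2 hI'i),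
        List.getElem_idxOf (List.idxOf_lt_length_iff.2 h0i)] at h4
      rw [Finset.card_empty] at h4
      exact hne (Finset.card_eq_zero.1 (Nat.le_zero.1 h4))

lemma bigL_suffix (Hsh : ∀ F : Finset E, f.IsProperFlat F →
      IsShelling (f.contract F).bergman (sh F)) :
    SuffixProp (bigL f sh) (fun s => ∀ v ∈ s, ∃ a : E, v = Sum.inl a) := by
  intro i j hi hj hij hP
  have hCi : ClosureOp.faceFlag ((bigL f sh)[i]'hi) = ∅ := by
    rw [Finset.eq_empty_iff_forall_notMem]
    intro F hF
    have hmem : Sum.inr F ∈ (bigL f sh)[i]'hi := Finset.mem_preimage.1 hF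
    obtain ⟨a, ha⟩ := hP _ hmem
    exact Sum.inr_ne_inl ha
  obtain ⟨hIK, hIb⟩ := bigL_tag_mem f sh (List.getElem_mem hi)
  have hclI : f.cl (ClosureOp.faceIndep ((bigL f sh)[i]'hi)) = Finset.univ := by
    by_contra hcl
    rw [blockOf, if_neg hcl] at hIb
    obtain ⟨c, hc, hce⟩ := List.mem_map.1 hIb
    have h1 := congrArg ClosureOp.faceFlag hce
    rw [faceFlag_union, hCi] at h1
    have hmm : f.cl (ClosureOp.faceIndep ((bigL f sh)[i]'hi)) ∈
        coneLift (f.cl (ClosureOp.faceIndep ((bigL f sh)[i]'hi))) c :=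
      Finset.mem_insert_self _ _
    rw [h1] at hmm
    exact Finset.notMem_empty _ hmm
  rcases bigL_order f sh Hsh hj hij with heq | ⟨hne, hlt⟩
  · -- same independent part
    obtain ⟨hJK, hJb⟩ := bigL_tag_mem f sh (List.getElem_mem hj)
    rw [← heq] at hJb
    rw [blockOf, if_pos hclI, List.mem_singleton] at hJb
    intro v hv
    rw [hJb] at hv
    rcases v with a | F
    · exact ⟨a, rfl⟩
    · exact absurd hv inr_not_mem_inl'
  · -- the later key is also a basis
    have hge := keyL_indexOf_of_cl_univ f hclI
    have hclJ : f.cl (ClosureOp.faceIndep ((bigL f sh)[j]'hj)) = Finset.univ := by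
      by_contra hcl2
      have hJK : ClosureOp.faceIndep ((bigL f sh)[j]'hj) ∈ keyL f :=
        (bigL_tag_mem f sh (List.getElem_mem hj)).1
      have hJi : ClosureOp.faceIndep ((bigL f sh)[j]'hj) ∈ indepsL f :=
        (mem_indepsL f).2 ⟨(mem_keyL f).1 hJK, hcl2⟩
      have h7 := (keyL_indexOf_indeps f hJi).2
      omega
    obtain ⟨hJK, hJb⟩ := bigL_tag_mem f sh (List.getElem_mem hj)
    rw [blockOf, if_pos hclJ, List.mem_singleton] at hJb
    intro v hv
    rw [hJb] at hv
    rcases v with a | F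
    · exact ⟨a, rfl⟩
    · exact absurd hv inr_not_mem_inl'

end PrefSuf

end FTB


/-- If for every proper flat `F` the Bergman complex `Δ(f/F)` is
shellable, then the augmented Bergman complex `Δ̂(f)` admits a shelling order in which
the facets `(∅, F_•)` corresponding to maximal flags (those all of whose vertices are
of flat type `x_F = Sum.inr F`) appear first and the facets `(I, ∅)` corresponding to
bases (those all of whose vertices are of ground-set type `y_a = Sum.inl a`) appear
last. -/
theorem flag_to_basis_shelling_exists
    {E : Type*} [Fintype E] [DecidableEq E] (f : ClosureOp E)
    (h : ∀ F : Finset E, f.IsProperFlat F → Shellable ((f.contract F).bergman)) :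
    ∃ l : List (Finset (E ⊕ Finset E)),
      IsShelling f.augBergman l ∧
      PrefixProp l (fun s => ∀ v ∈ s, ∃ F : Finset E, v = Sum.inr F) ∧
      SuffixProp l (fun s => ∀ v ∈ s, ∃ a : E, v = Sum.inl a) := by
  classical
  set sh : (F : Finset E) → List (Finset (Finset {x // x ∉ F})) :=
    fun F => if hF : f.IsProperFlat F then (h F hF).choose else [] with hshdef
  have Hsh : ∀ F : Finset E, f.IsProperFlat F →
      IsShelling (f.contract F).bergman (sh F) := by
    intro F hF
    have : sh F = (h F hF).choose := by rw [hshdef]; exact dif_pos hF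
    rw [this]
    exact (h F hF).choose_spec
  exact ⟨FTB.bigL f sh,
    FTB.isShelling_of (FTB.bigL_nodup f sh Hsh) (FTB.bigL_mem_iff f sh Hsh)
      (FTB.bigL_exch f sh Hsh),
    FTB.bigL_prefix f sh Hsh, FTB.bigL_suffix f sh Hsh⟩
end

section
/- Let f be a closure operator on a finite set E. The link of the vertex x_{f(∅)} in the augmented Bergman complex Δ̂(f) is equal to the Bergman complex Δ(f). Consequently, if Δ̂(f) is shellable then Δ(f) is shellable. -/
open Finset

set_option linter.unusedSectionVars false

section ListPrecLemmas
variable {α : Type*}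

lemma listPrec_iff_sublist {l : List α} {a b : α} :
    ListPrec l a b ↔ ∃ t, (a :: t).Sublist l ∧ b ∈ t := by
  constructor
  · rintro ⟨i, j, hi, hj, hij, rfl, rfl⟩
    refine ⟨l.drop (i+1), ?_, ?_⟩
    · rw [← List.drop_eq_getElem_cons hi]; exact List.drop_sublist _ _
    · have hj' : j - (i+1) < (l.drop (i+1)).length := by
        simp [List.length_drop]; omega
      have h2 : (l.drop (i+1))[j - (i+1)] = l[j] := by
        rw [List.getElem_drop]; congr 1; omega
      rw [← h2]; exact List.getElem_mem _
  · rintro ⟨t, hsub, hb⟩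
    rw [List.cons_sublist_iff] at hsub
    obtain ⟨r₁, r₂, rfl, ha, ht⟩ := hsub
    obtain ⟨i, hi, hai⟩ := List.getElem_of_mem ha
    have hb2 : b ∈ r₂ := ht.mem hb
    obtain ⟨j, hj, hbj⟩ := List.getElem_of_mem hb2
    refine ⟨i, r₁.length + j, by simp; omega, by simp; omega, by omega, ?_, ?_⟩
    · rw [List.getElem_append_left]; exact hai
    · rw [List.getElem_append_right (by omega)]
      simpa using hbj

lemma ListPrec.of_sublist {l l' : List α} {a b : α} (h : ListPrec l' a b)
    (hs : l'.Sublist l) : ListPrec l a b := by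
  rw [listPrec_iff_sublist] at h ⊢
  obtain ⟨t, h1, h2⟩ := h
  exact ⟨t, h1.trans hs, h2⟩

lemma ListPrec.asymm_nodup {l : List α} (hl : l.Nodup) {a b : α}
    (h1 : ListPrec l a b) (h2 : ListPrec l b a) : False := by
  obtain ⟨i, j, hi, hj, hij, ha, hb⟩ := h1
  obtain ⟨i', j', hi', hj', hij', hb', ha'⟩ := h2
  have e1 : i = j' := (hl.getElem_inj_iff).mp (ha.trans ha'.symm)
  have e2 : j = i' := (hl.getElem_inj_iff).mp (hb.trans hb'.symm)
  omega

lemma listPrec_total {l : List α} {a b : α} (ha : a ∈ l) (hb : b ∈ l) (hne : a ≠ b) :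
    ListPrec l a b ∨ ListPrec l b a := by
  obtain ⟨i, hi, hai⟩ := List.getElem_of_mem ha
  obtain ⟨j, hj, hbj⟩ := List.getElem_of_mem hb
  rcases lt_trichotomy i j with h | h | h
  · exact Or.inl ⟨i, j, hi, hj, h, hai, hbj⟩
  · exfalso; apply hne; subst h; rw [← hai, ← hbj]
  · exact Or.inr ⟨j, i, hj, hi, h, hbj, hai⟩

lemma listPrec_ne_of_nodup {l : List α} (hl : l.Nodup) {a b : α} (h : ListPrec l a b) :
    a ≠ b := by
  rintro rfl
  obtain ⟨i, j, hi, hj, hij, ha, hb⟩ := h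
  exact absurd (hl.getElem_inj_iff.mp (ha.trans hb.symm)) (by omega)

lemma listPrec_filter {l : List α} (hl : l.Nodup) (p : α → Bool) {a b : α}
    (h : ListPrec l a b) (hpa : p a) (hpb : p b) : ListPrec (l.filter p) a b := by
  have hne : a ≠ b := listPrec_ne_of_nodup hl h
  obtain ⟨i, j, hi, hj, hij, ha, hb⟩ := h
  have ha' : a ∈ l.filter p := List.mem_filter.mpr ⟨ha ▸ List.getElem_mem hi, hpa⟩
  have hb' : b ∈ l.filter p := List.mem_filter.mpr ⟨hb ▸ List.getElem_mem hj, hpb⟩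
  rcases listPrec_total ha' hb' hne with h' | h'
  · exact h'
  · exact absurd ((h'.of_sublist List.filter_sublist)) fun h'' =>
      ListPrec.asymm_nodup hl ⟨i, j, hi, hj, hij, ha, hb⟩ h''
  
lemma mem_take_iff' {l : List α} {i : ℕ} {a : α} :
    a ∈ l.take i ↔ ∃ j, ∃ _ : j < l.length, j < i ∧ l[j] = a := by
  rw [List.mem_iff_getElem]
  constructor
  · rintro ⟨j, hj, hja⟩
    have hj' : j < l.length := lt_of_lt_of_le hj (by simp [List.length_take])
    refine ⟨j, hj', ?_, ?_⟩
    · have := hj; simp [List.length_take] at this; omega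
    · rw [← hja, List.getElem_take]
  · rintro ⟨j, hj, hji, hja⟩
    refine ⟨j, by simp [List.length_take]; omega, ?_⟩
    rw [List.getElem_take]; exact hja

lemma mem_take_iff_listPrec {l : List α} (hl : l.Nodup) {i : ℕ} (hi : i < l.length) {a : α} :
    a ∈ l.take i ↔ ListPrec l a l[i] := by
  rw [mem_take_iff']
  constructor
  · rintro ⟨j, hj, hji, rfl⟩
    exact ⟨j, i, hj, hi, hji, rfl, rfl⟩
  · rintro ⟨j, k, hj, hk, hjk, rfl, hk2⟩
    have : k = i := hl.getElem_inj_iff.mp hk2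
    exact ⟨j, hj, by omega, rfl⟩

end ListPrecLemmas

section Complexes2
variable {V : Type*} {W : Type*}

lemma exists_facet' [Fintype V] (Δ : Set (Finset V)) {s : Finset V} (hs : s ∈ Δ) :
    ∃ t, IsFacet Δ t ∧ s ⊆ t := by
  classical
  obtain ⟨a, ⟨haΔ, hsa⟩, hmax⟩ :=
    Set.Finite.exists_maximalFor Finset.card {t ∈ Δ | s ⊆ t} (Set.toFinite _)
      ⟨s, hs, subset_rfl⟩
  refine ⟨a, ⟨haΔ, fun b hb hab => ?_⟩, hsa⟩
  have hb' : b ∈ {t ∈ Δ | s ⊆ t} := ⟨hb, hsa.trans hab⟩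
  exact Finset.eq_of_subset_of_card_le hab
    (hmax hb' (Finset.card_le_card hab))

lemma isFacet_faceLink_iff [Fintype V] [DecidableEq V] (Δ : Set (Finset V)) (v : V)
    (s : Finset V) :
    IsFacet (faceLink Δ v) s ↔ v ∉ s ∧ IsFacet Δ (insert v s) := by
  constructor
  · rintro ⟨⟨hvs, hins⟩, hmax⟩
    obtain ⟨σ, ⟨hσΔ, hσmax⟩, hsubσ⟩ := exists_facet' Δ hins
    have hvσ : v ∈ σ := hsubσ (Finset.mem_insert_self v s)
    have hmem : σ.erase v ∈ faceLink Δ v :=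
      ⟨Finset.notMem_erase v σ, by rwa [Finset.insert_erase hvσ]⟩
    have hsub : s ⊆ σ.erase v := fun x hx =>
      Finset.mem_erase.mpr ⟨fun h => hvs (h ▸ hx), hsubσ (Finset.mem_insert_of_mem hx)⟩
    have : s = σ.erase v := hmax _ hmem hsub
    refine ⟨hvs, ?_⟩
    have : insert v s = σ := by rw [this, Finset.insert_erase hvσ]
    rw [this]; exact ⟨hσΔ, hσmax⟩
  · rintro ⟨hvs, hΔ, hmax⟩
    refine ⟨⟨hvs, hΔ⟩, fun t ⟨hvt, ht⟩ hst => ?_⟩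
    have := hmax _ ht (Finset.insert_subset_insert v hst)
    calc s = (insert v s).erase v := by rw [Finset.erase_insert hvs]
    _ = (insert v t).erase v := by rw [this]
    _ = t := by rw [Finset.erase_insert hvt]

lemma shellable'_faceLink [Fintype V] [DecidableEq V] {Δ : Set (Finset V)} (v : V)
    (h : Shellable Δ) : Shellable (faceLink Δ v) := by
  classical
  obtain ⟨l, hnd, hmem, hpure⟩ := h
  set lf := l.filter (fun s => v ∈ s) with hlf
  have hndf : lf.Nodup := hnd.filter _
  have hmemlf : ∀ s, s ∈ lf ↔ s ∈ l ∧ v ∈ s := by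
    intro s; rw [hlf, List.mem_filter]; simp
  refine ⟨lf.map (·.erase v), ?_, ?_, ?_⟩
  · refine List.Nodup.map_on ?_ hndf
    intro x hx y hy hxy
    have hvx : v ∈ x := ((hmemlf x).mp hx).2
    have hvy : v ∈ y := ((hmemlf y).mp hy).2
    calc x = insert v (x.erase v) := (Finset.insert_erase hvx).symm
    _ = insert v (y.erase v) := by rw [hxy]
    _ = y := Finset.insert_erase hvy
  · intro s
    rw [List.mem_map]
    constructor
    · rintro ⟨σ, hσ, rfl⟩
      obtain ⟨hσl, hvσ⟩ := (hmemlf σ).mp hσ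
      rw [isFacet_faceLink_iff]
      refine ⟨Finset.notMem_erase v σ, ?_⟩
      rw [Finset.insert_erase hvσ]
      exact (hmem σ).mp hσl
    · intro hs
      rw [isFacet_faceLink_iff] at hs
      obtain ⟨hvs, hfac⟩ := hs
      refine ⟨insert v s, (hmemlf _).mpr ⟨(hmem _).mpr hfac, Finset.mem_insert_self v s⟩, ?_⟩
      rw [Finset.erase_insert hvs]
  · intro i hi hi0
    rw [List.length_map] at hi
    have hgeti : (lf.map (·.erase v))[i] = lf[i].erase v := by
      rw [List.getElem_map]
    set S := lf[i] with hS
    have hSlf : S ∈ lf := List.getElem_mem hi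
    obtain ⟨hSl, hvS⟩ := (hmemlf S).mp hSlf
    obtain ⟨q, hq, hlq⟩ := List.getElem_of_mem hSl
    constructor
    · refine ⟨∅, ⟨(lf.map (·.erase v))[0], ?_, Finset.empty_subset _⟩, ?_⟩
      · rw [mem_take_iff']
        exact ⟨0, by rw [List.length_map]; omega, hi0, rfl⟩
      · rw [hgeti]; exact Finset.empty_subset _
    · rintro m ⟨⟨⟨s₀, hs₀take, hms₀⟩, hmS⟩, hmax⟩
      rw [hgeti] at hmS
      -- recover T ∈ lf.take i with s₀ = T.erase v
      rw [← List.map_take, List.mem_map] at hs₀take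
      obtain ⟨T, hTtake, rfl⟩ := hs₀take
      obtain ⟨hTl, hvT⟩ := (hmemlf T).mp (List.mem_of_mem_take hTtake)
      have hTprec : ListPrec lf T S := (mem_take_iff_listPrec hndf hi).mp hTtake
      have hTprecl : ListPrec l T S := hTprec.of_sublist List.filter_sublist
      obtain ⟨p, q', hp, hq', hpq', hlp, hlq'⟩ := hTprecl
      have hq'q : q' = q := hnd.getElem_inj_iff.mp (hlq'.trans hlq.symm)
      subst hq'q
      -- the face insert v m of the big complex
      have htT : insert v m ⊆ T := by
        refine Finset.insert_subset hvT (hms₀.trans (Finset.erase_subset v T))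
      have htS : insert v m ⊆ S := by
        refine Finset.insert_subset hvS (hmS.trans (Finset.erase_subset v S))
      have hTtakeq : T ∈ l.take q' :=
        (mem_take_iff_listPrec hnd hq').mpr (by rw [hlq']; exact ⟨p, q', hp, hq', hpq', hlp, hlq'⟩)
      have hpureq := hpure q' hq' (by omega)
      rw [hlq'] at hpureq
      have htY : insert v m ∈ {t | ∃ s ∈ l.take q', t ⊆ s} ∩ {t | t ⊆ S} :=
        ⟨⟨T, hTtakeq, htT⟩, htS⟩
      obtain ⟨m', hm'fac, hsubm'⟩ := exists_facet' _ htY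
      have hm'card := hpureq.2 m' hm'fac
      obtain ⟨⟨s₁, hs₁take, hm's₁⟩, hm'S⟩ := hm'fac.1
      have hvm' : v ∈ m' := hsubm' (Finset.mem_insert_self v m)
      have hvs₁ : v ∈ s₁ := hm's₁ hvm'
      have hs₁l : s₁ ∈ l := List.mem_of_mem_take hs₁take
      have hs₁lf : s₁ ∈ lf := (hmemlf s₁).mpr ⟨hs₁l, hvs₁⟩
      have hs₁prec : ListPrec l s₁ S := by
        have := (mem_take_iff_listPrec hnd hq').mp hs₁take
        rwa [hlq'] at this
      have hs₁preclf : ListPrec lf s₁ S := by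
        refine listPrec_filter hnd _ hs₁prec (by simpa using hvs₁) (by simpa using hvS)
      have hs₁takei : s₁ ∈ lf.take i := (mem_take_iff_listPrec hndf hi).mpr hs₁preclf
      -- m'.erase v is in the link intersection complex
      have hvm : v ∉ m := fun hvm => (Finset.mem_erase.mp (hmS hvm)).1 rfl
      have hm'' : m'.erase v ∈
          ({t | ∃ s ∈ (lf.map (·.erase v)).take i, t ⊆ s} ∩ {t | t ⊆ (lf.map (·.erase v))[i]}) := by
        constructor
        · refine ⟨s₁.erase v, ?_, Finset.erase_subset_erase v hm's₁⟩
          rw [← List.map_take, List.mem_map]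
          exact ⟨s₁, hs₁takei, rfl⟩
        · rw [hgeti]; exact Finset.erase_subset_erase v hm'S
      have hmeq : m = m'.erase v :=
        hmax _ hm'' fun x hx => Finset.mem_erase.mpr
          ⟨fun h => hvm (h ▸ hx), hsubm' (Finset.mem_insert_of_mem hx)⟩
      have h1 : 0 < m'.card := Finset.card_pos.mpr ⟨v, hvm'⟩
      have h2 : 0 < S.card := Finset.card_pos.mpr ⟨v, hvS⟩
      rw [hgeti, hmeq, Finset.card_erase_of_mem hvm', Finset.card_erase_of_mem hvS]
      omega

end Complexes2

section Transfer
variable {V W : Type*} [DecidableEq V] [DecidableEq W]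

lemma image_preimage_of_subset' {e : V → W} (he : Function.Injective e)
    {u : Finset W} {A : Finset V} (h : u ⊆ A.image e) :
    (u.preimage e he.injOn).image e = u := by
  ext x
  simp only [Finset.mem_image, Finset.mem_preimage]
  constructor
  · rintro ⟨y, hy, rfl⟩; exact hy
  · intro hx
    obtain ⟨a, _, rfl⟩ := Finset.mem_image.mp (h hx)
    exact ⟨a, hx, rfl⟩

lemma preimage_mono' {e : V → W} (he : Function.Injective e) {u w : Finset W}
    (h : u ⊆ w) : u.preimage e he.injOn ⊆ w.preimage e he.injOn := by
  intro x hx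
  rw [Finset.mem_preimage] at *
  exact h hx

lemma shellable'_of_image {e : V → W} (he : Function.Injective e) {Δ : Set (Finset V)}
    (h : Shellable ((fun C : Finset V => C.image e) '' Δ)) : Shellable Δ := by
  classical
  set Δ' : Set (Finset W) := (fun C : Finset V => C.image e) '' Δ with hΔ'
  set g : Finset W → Finset V := fun t => t.preimage e he.injOn with hg
  have hge : ∀ A : Finset V, g (A.image e) = A := by
    intro A
    apply Finset.image_injective he
    exact image_preimage_of_subset' he subset_rfl
  have hfacet : ∀ A : Finset V, IsFacet Δ A ↔ IsFacet Δ' (A.image e) := by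
    intro A
    constructor
    · rintro ⟨hA, hmax⟩
      refine ⟨⟨A, hA, rfl⟩, ?_⟩
      rintro t ⟨B, hB, rfl⟩ hsub
      rw [(Finset.image_subset_image_iff he)] at hsub
      rw [hmax B hB hsub]
    · rintro ⟨⟨B, hB, hBe⟩, hmax⟩
      have hAB : A = B := Finset.image_injective he hBe.symm
      subst hAB
      refine ⟨hB, fun t ht hst => ?_⟩
      have := hmax (t.image e) ⟨t, ht, rfl⟩ (Finset.image_subset_image hst)
      exact Finset.image_injective he this
  obtain ⟨l', hnd, hmem, hpure⟩ := h
  have hl'img : ∀ t ∈ l', (g t).image e = t := by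
    intro t ht
    obtain ⟨⟨A, _, rfl⟩, _⟩ := (hmem t).mp ht
    rw [hge]
  refine ⟨l'.map g, ?_, ?_, ?_⟩
  · refine List.Nodup.map_on ?_ hnd
    intro x hx y hy hxy
    rw [← hl'img x hx, ← hl'img y hy, hxy]
  · intro s
    rw [List.mem_map]
    constructor
    · rintro ⟨t, ht, rfl⟩
      have h1 : (g t).image e = t := hl'img t ht
      rw [hfacet, h1]
      exact (hmem t).mp ht
    · intro hs
      refine ⟨s.image e, (hmem _).mpr ((hfacet s).mp hs), hge s⟩
  · intro i hi hi0
    rw [List.length_map] at hi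
    have hgeti : (l'.map g)[i] = g l'[i] := List.getElem_map _
    have hiimg : (g l'[i]).image e = l'[i] := hl'img _ (List.getElem_mem hi)
    have hicard : (g l'[i]).card = l'[i].card := by
      conv_rhs => rw [← hiimg]
      rw [Finset.card_image_of_injective _ he]
    obtain ⟨_, hpfac⟩ := hpure i hi hi0
    constructor
    · refine ⟨∅, ⟨(l'.map g)[0], ?_, Finset.empty_subset _⟩, Finset.empty_subset _⟩
      rw [mem_take_iff']
      exact ⟨0, by rw [List.length_map]; omega, hi0, rfl⟩
    · rintro m ⟨⟨⟨s₀, hs₀take, hms₀⟩, hmi⟩, hmax⟩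
      rw [hgeti] at hmi
      rw [← List.map_take, List.mem_map] at hs₀take
      obtain ⟨s', hs'take, rfl⟩ := hs₀take
      have hs'img : (g s').image e = s' := hl'img _ (List.mem_of_mem_take hs'take)
      have hmfac : IsFacet ({t | ∃ s ∈ l'.take i, t ⊆ s} ∩ {t | t ⊆ l'[i]}) (m.image e) := by
        constructor
        · constructor
          · refine ⟨s', hs'take, ?_⟩
            rw [← hs'img]
            exact Finset.image_subset_image hms₀
          · rw [← hiimg]
            exact Finset.image_subset_image hmi
        · rintro u ⟨⟨s₁, hs₁take, hus₁⟩, hui⟩ hsubu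
          have huimg : (g u).image e = u := by
            refine image_preimage_of_subset' he (A := g l'[i]) ?_
            rwa [hiimg]
          have hgu : g u ∈ ({t | ∃ s ∈ (l'.map g).take i, t ⊆ s} ∩ {t | t ⊆ (l'.map g)[i]}) := by
            constructor
            · refine ⟨g s₁, ?_, preimage_mono' he hus₁⟩
              rw [← List.map_take, List.mem_map]
              exact ⟨s₁, hs₁take, rfl⟩
            · rw [hgeti]
              exact preimage_mono' he hui
          have hmgu : m ⊆ g u := by
            rw [← Finset.image_subset_image_iff he, huimg]
            exact hsubu
          rw [hmax (g u) hgu hmgu, huimg]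
      have := hpfac _ hmfac
      rw [Finset.card_image_of_injective _ he] at this
      rw [hgeti, hicard]
      exact this

end Transfer


/-- For a closure operator `f` (with `f(∅)` a proper flat, so that
`x_{f(∅)}` is a vertex of `Δ̂(f)`), the link of `x_{f(∅)}` in the augmented Bergman
complex equals the Bergman complex `Δ(f)` (embedded via `Sum.inr`); consequently, if
`Δ̂(f)` is shellable then `Δ(f)` is shellable. -/
theorem link_of_cl_empty_eq_bergman
    {E : Type*} [Fintype E] [DecidableEq E] (f : ClosureOp E)
    (h : f.cl ∅ ≠ Finset.univ) :
    faceLink f.augBergman (Sum.inr (f.cl ∅))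
        = (fun C : Finset (Finset E) =>
            C.image (Sum.inr : Finset E → E ⊕ Finset E)) '' f.bergman ∧
    (Shellable f.augBergman → Shellable f.bergman) := by

  classical
  have heq : faceLink f.augBergman (Sum.inr (f.cl ∅))
      = (fun C : Finset (Finset E) =>
          C.image (Sum.inr : Finset E → E ⊕ Finset E)) '' f.bergman := by
    ext s
    constructor
    · rintro ⟨hvs, hins⟩
      obtain ⟨I, C, hequ, hI, hflats, hchain, hcl⟩ := hins
      have hclC : f.cl ∅ ∈ C := by
        have hm : Sum.inr (f.cl ∅) ∈ I.image Sum.inl ∪ C.image Sum.inr := by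
          rw [← hequ]; exact Finset.mem_insert_self _ _
        rcases Finset.mem_union.mp hm with h' | h'
        · obtain ⟨a, _, ha⟩ := Finset.mem_image.mp h'
          exact absurd ha (by simp)
        · obtain ⟨F, hF, hFe⟩ := Finset.mem_image.mp h'
          rw [Sum.inr.injEq] at hFe
          exact hFe ▸ hF
      have hclI : f.cl I ⊆ f.cl ∅ := hcl _ hclC
      have hIempty : I = ∅ := by
        by_contra hne
        obtain ⟨i, hi⟩ := Finset.nonempty_iff_ne_empty.mpr hne
        have h1 := hI i hi
        have h2 : f.cl I ⊆ f.cl (I.erase i) :=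
          hclI.trans (f.cl_mono (Finset.empty_subset _))
        exact h1.not_subset h2
      subst hIempty
      have hequ' : insert (Sum.inr (f.cl ∅)) s = C.image Sum.inr := by
        rw [hequ, Finset.image_empty, Finset.empty_union]
      refine ⟨C.erase (f.cl ∅), ⟨?_, ?_⟩, ?_⟩
      · intro F hF
        have hF' := Finset.mem_of_mem_erase hF
        refine ⟨hflats F hF', ?_⟩
        exact Finset.ssubset_iff_subset_ne.mpr
          ⟨hcl F hF', fun h' => (Finset.mem_erase.mp hF).1 h'.symm⟩
      · intro F hF G hG
        exact hchain F (Finset.mem_of_mem_erase hF) G (Finset.mem_of_mem_erase hG)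
      · show (C.erase (f.cl ∅)).image Sum.inr = s
        rw [Finset.image_erase Sum.inr_injective, ← hequ', Finset.erase_insert hvs]
    · rintro ⟨C, ⟨hflats, hchain⟩, rfl⟩
      constructor
      · intro h'
        obtain ⟨F, hF, hFe⟩ := Finset.mem_image.mp h'
        rw [Sum.inr.injEq] at hFe
        exact absurd (hFe ▸ (hflats F hF).2) (by exact fun hss => hss.ne rfl)
      · refine ⟨∅, insert (f.cl ∅) C, ?_, ?_, ?_, ?_, ?_⟩
        · rw [Finset.image_empty, Finset.empty_union, Finset.image_insert]
        · intro i hi; exact absurd hi (Finset.notMem_empty i)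
        · intro F hF
          rcases Finset.mem_insert.mp hF with rfl | hF'
          · exact ⟨f.cl_idem ∅, h⟩
          · exact (hflats F hF').1
        · intro F hF G hG
          rcases Finset.mem_insert.mp hF with rfl | hF' <;>
            rcases Finset.mem_insert.mp hG with rfl | hG'
          · exact Or.inl subset_rfl
          · exact Or.inl (hflats G hG').2.subset
          · exact Or.inr (hflats F hF').2.subset
          · exact hchain F hF' G hG'
        · intro F hF
          rcases Finset.mem_insert.mp hF with rfl | hF'
          · exact subset_rfl
          · exact (hflats F hF').2.subset
  refine ⟨heq, fun hsh => ?_⟩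
  have h1 := shellable'_faceLink (Sum.inr (f.cl ∅)) hsh
  rw [heq] at h1
  exact shellable'_of_image Sum.inr_injective h1
end
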